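/- arXiv:2602.07346 — 11 statements merged into one kernel-verified Lean document; each statement's English description precedes it below -/
import Mathlib

section
/- Let n ≥ 1 be an integer with gcd(n,6) = 1 and let ζ ∈ ℂ be a primitive nth root of unity. If a_1, a_2, a_3, a_4 and b_1, b_2, b_3, b_4 are integers such that ζ^{a_1} + ζ^{a_2} + ζ^{a_3} + ζ^{a_4} = ζ^{b_1} + ζ^{b_2} + ζ^{b_3} + ζ^{b_4}, then the multisets {a_1 mod n, a_2 mod n, a_3 mod n, a_4 mod n} and {b_1 mod n, b_2 mod n, b_3 mod n, b_4 mod n} of residues modulo n are equal. -/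
open Polynomial

/-- Reduce integer exponents to natural exponents mod n. -/
lemma zpow_eq_pow_val {n : ℕ} [NeZero n] {ζ : ℂ} (hζ : IsPrimitiveRoot ζ n) (a : ℤ) :
    ζ ^ a = ζ ^ ((a : ZMod n).val) := by
  have hne : ζ ≠ 0 := hζ.ne_zero (NeZero.ne n)
  have hval : (((a : ZMod n).val : ℤ)) = a % n := ZMod.val_intCast a
  have h1 : ζ ^ a = ζ ^ ((n : ℤ) * (a / n) + a % n) := by
    rw [Int.mul_ediv_add_emod]
  rw [h1, zpow_add₀ hne, zpow_mul, ← hval, zpow_natCast, zpow_natCast, hζ.pow_eq_one]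
  simp

/-- If all power sums up to 4 agree, the multisets of 4 complex numbers agree. -/
lemma multiset_eq_of_power_sums (x₁ x₂ x₃ x₄ y₁ y₂ y₃ y₄ : ℂ)
    (h1 : x₁ + x₂ + x₃ + x₄ = y₁ + y₂ + y₃ + y₄)
    (h2 : x₁^2 + x₂^2 + x₃^2 + x₄^2 = y₁^2 + y₂^2 + y₃^2 + y₄^2)
    (h3 : x₁^3 + x₂^3 + x₃^3 + x₄^3 = y₁^3 + y₂^3 + y₃^3 + y₄^3)
    (h4 : x₁^4 + x₂^4 + x₃^4 + x₄^4 = y₁^4 + y₂^4 + y₃^4 + y₄^4) :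
    ({x₁, x₂, x₃, x₄} : Multiset ℂ) = ({y₁, y₂, y₃, y₄} : Multiset ℂ) := by
  have he1 : x₁ + x₂ + x₃ + x₄ = y₁ + y₂ + y₃ + y₄ := h1
  have he2 : x₁*x₂ + x₁*x₃ + x₁*x₄ + x₂*x₃ + x₂*x₄ + x₃*x₄
      = y₁*y₂ + y₁*y₃ + y₁*y₄ + y₂*y₃ + y₂*y₄ + y₃*y₄ := by
    linear_combination ((x₁+x₂+x₃+x₄+y₁+y₂+y₃+y₄)/2) * h1 - (1/2 : ℂ) * h2
  have he3 : x₁*x₂*x₃ + x₁*x₂*x₄ + x₁*x₃*x₄ + x₂*x₃*x₄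
      = y₁*y₂*y₃ + y₁*y₂*y₄ + y₁*y₃*y₄ + y₂*y₃*y₄ := by
    set p1x := x₁ + x₂ + x₃ + x₄
    set p1y := y₁ + y₂ + y₃ + y₄
    set p2x := x₁^2 + x₂^2 + x₃^2 + x₄^2
    linear_combination ((p1x^2 + p1x*p1y + p1y^2 - 3*p2x)/6) * h1 - (p1y/2) * h2 + (1/3 : ℂ) * h3
  have he4 : x₁*x₂*x₃*x₄ = y₁*y₂*y₃*y₄ := by
    set p1x := x₁ + x₂ + x₃ + x₄
    set p1y := y₁ + y₂ + y₃ + y₄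
    set p2x := x₁^2 + x₂^2 + x₃^2 + x₄^2
    set p2y := y₁^2 + y₂^2 + y₃^2 + y₄^2
    set p3x := x₁^3 + x₂^3 + x₃^3 + x₄^3
    linear_combination ((p1x^3 + p1x^2*p1y + p1x*p1y^2 + p1y^3 - 6*p2x*(p1x+p1y) + 8*p3x)/24) * h1
      + ((-6*p1y^2 + 3*(p2x+p2y))/24) * h2 + (p1y/3) * h3 - (1/4 : ℂ) * h4
  have hpoly : (X - C x₁) * (X - C x₂) * (X - C x₃) * (X - C x₄)
      = (X - C y₁) * (X - C y₂) * (X - C y₃) * (X - C y₄) := by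
    have expand : ∀ z₁ z₂ z₃ z₄ : ℂ, (X - C z₁) * (X - C z₂) * (X - C z₃) * (X - C z₄)
        = X^4 - C (z₁+z₂+z₃+z₄) * X^3
          + C (z₁*z₂ + z₁*z₃ + z₁*z₄ + z₂*z₃ + z₂*z₄ + z₃*z₄) * X^2
          - C (z₁*z₂*z₃ + z₁*z₂*z₄ + z₁*z₃*z₄ + z₂*z₃*z₄) * X + C (z₁*z₂*z₃*z₄) := by
      intro z₁ z₂ z₃ z₄
      simp only [map_add, map_mul]
      ring
    rw [expand, expand, he1, he2, he3, he4]
  have hx : (({x₁, x₂, x₃, x₄} : Multiset ℂ).map fun a => X - C a).prod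
      = (X - C x₁) * (X - C x₂) * (X - C x₃) * (X - C x₄) := by
    simp [Multiset.map_cons, Multiset.prod_cons, mul_assoc]
  have hy : (({y₁, y₂, y₃, y₄} : Multiset ℂ).map fun a => X - C a).prod
      = (X - C y₁) * (X - C y₂) * (X - C y₃) * (X - C y₄) := by
    simp [Multiset.map_cons, Multiset.prod_cons, mul_assoc]
  have := roots_multiset_prod_X_sub_C ({x₁, x₂, x₃, x₄} : Multiset ℂ)
  rw [hx, hpoly, ← hy, roots_multiset_prod_X_sub_C] at this
  exact this.symm

/-- If `gcd(n,6) = 1`, `ζ` is a primitive `n`th root of unity, and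
`ζ^{a₁} + ζ^{a₂} + ζ^{a₃} + ζ^{a₄} = ζ^{b₁} + ζ^{b₂} + ζ^{b₃} + ζ^{b₄}`, then the multisets of
residues `{a₁,…,a₄}` and `{b₁,…,b₄}` in `ZMod n` are equal. -/
theorem stmt_3 (n : ℕ) (hn : 1 ≤ n) (h6 : Nat.gcd n 6 = 1)
    (ζ : ℂ) (hζ : IsPrimitiveRoot ζ n)
    (a₁ a₂ a₃ a₄ b₁ b₂ b₃ b₄ : ℤ)
    (h : ζ ^ a₁ + ζ ^ a₂ + ζ ^ a₃ + ζ ^ a₄ = ζ ^ b₁ + ζ ^ b₂ + ζ ^ b₃ + ζ ^ b₄) :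
    ({(a₁ : ZMod n), (a₂ : ZMod n), (a₃ : ZMod n), (a₄ : ZMod n)} : Multiset (ZMod n)) =
      ({(b₁ : ZMod n), (b₂ : ZMod n), (b₃ : ZMod n), (b₄ : ZMod n)} : Multiset (ZMod n)) := by
  have hnpos : 0 < n := hn
  haveI : NeZero n := ⟨hnpos.ne'⟩
  set A₁ := ((a₁ : ZMod n)).val with hA₁
  set A₂ := ((a₂ : ZMod n)).val with hA₂
  set A₃ := ((a₃ : ZMod n)).val with hA₃
  set A₄ := ((a₄ : ZMod n)).val with hA₄
  set B₁ := ((b₁ : ZMod n)).val with hB₁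
  set B₂ := ((b₂ : ZMod n)).val with hB₂
  set B₃ := ((b₃ : ZMod n)).val with hB₃
  set B₄ := ((b₄ : ZMod n)).val with hB₄
  have h' : ζ ^ A₁ + ζ ^ A₂ + ζ ^ A₃ + ζ ^ A₄ = ζ ^ B₁ + ζ ^ B₂ + ζ ^ B₃ + ζ ^ B₄ := by
    rw [← zpow_eq_pow_val hζ, ← zpow_eq_pow_val hζ, ← zpow_eq_pow_val hζ, ← zpow_eq_pow_val hζ,
        ← zpow_eq_pow_val hζ, ← zpow_eq_pow_val hζ, ← zpow_eq_pow_val hζ, ← zpow_eq_pow_val hζ]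
    exact h
  -- the polynomial relation
  set P : ℚ[X] := X ^ A₁ + X ^ A₂ + X ^ A₃ + X ^ A₄ - X ^ B₁ - X ^ B₂ - X ^ B₃ - X ^ B₄ with hP
  have haevalP : ∀ μ : ℂ, aeval μ P = μ ^ A₁ + μ ^ A₂ + μ ^ A₃ + μ ^ A₄
      - μ ^ B₁ - μ ^ B₂ - μ ^ B₃ - μ ^ B₄ := by
    intro μ; simp [hP]
  have hroot : aeval ζ P = 0 := by
    rw [haevalP]; linear_combination h'
  have hdvd : minpoly ℚ ζ ∣ P := minpoly.dvd ℚ ζ hroot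
  have key : ∀ k : ℕ, Nat.Coprime k n →
      (ζ^k) ^ A₁ + (ζ^k) ^ A₂ + (ζ^k) ^ A₃ + (ζ^k) ^ A₄
        = (ζ^k) ^ B₁ + (ζ^k) ^ B₂ + (ζ^k) ^ B₃ + (ζ^k) ^ B₄ := by
    intro k hk
    have hprim : IsPrimitiveRoot (ζ ^ k) n := hζ.pow_of_coprime k hk
    have hmin : minpoly ℚ ζ = minpoly ℚ (ζ ^ k) := by
      rw [← cyclotomic_eq_minpoly_rat hζ hnpos, ← cyclotomic_eq_minpoly_rat hprim hnpos]
    have hroot2 : aeval (ζ ^ k) P = 0 := by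
      obtain ⟨Q, hQ⟩ := hdvd
      rw [hQ, map_mul, hmin, minpoly.aeval, zero_mul]
    rw [haevalP] at hroot2
    linear_combination hroot2
  -- coprimality of 2, 3, 4 with n
  have hcop : Nat.Coprime n 6 := h6
  have hc2 : Nat.Coprime 2 n := (Nat.Coprime.coprime_dvd_right (by norm_num) hcop).symm
  have hc3 : Nat.Coprime 3 n := (Nat.Coprime.coprime_dvd_right (by norm_num) hcop).symm
  have hc4 : Nat.Coprime 4 n := by
    have := Nat.Coprime.mul hc2 hc2
    simpa using this
  have hp2 := key 2 hc2
  have hp3 := key 3 hc3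
  have hp4 := key 4 hc4
  rw [pow_right_comm ζ 2 A₁, pow_right_comm ζ 2 A₂, pow_right_comm ζ 2 A₃, pow_right_comm ζ 2 A₄, pow_right_comm ζ 2 B₁, pow_right_comm ζ 2 B₂, pow_right_comm ζ 2 B₃, pow_right_comm ζ 2 B₄] at hp2
  rw [pow_right_comm ζ 3 A₁, pow_right_comm ζ 3 A₂, pow_right_comm ζ 3 A₃, pow_right_comm ζ 3 A₄, pow_right_comm ζ 3 B₁, pow_right_comm ζ 3 B₂, pow_right_comm ζ 3 B₃, pow_right_comm ζ 3 B₄] at hp3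
  rw [pow_right_comm ζ 4 A₁, pow_right_comm ζ 4 A₂, pow_right_comm ζ 4 A₃, pow_right_comm ζ 4 A₄, pow_right_comm ζ 4 B₁, pow_right_comm ζ 4 B₂, pow_right_comm ζ 4 B₃, pow_right_comm ζ 4 B₄] at hp4
  have hmul := multiset_eq_of_power_sums (ζ ^ A₁) (ζ ^ A₂) (ζ ^ A₃) (ζ ^ A₄)
      (ζ ^ B₁) (ζ ^ B₂) (ζ ^ B₃) (ζ ^ B₄) h' hp2 hp3 hp4
  -- transfer back via the injective map c ↦ ζ ^ c.val
  have hinj : Function.Injective (fun c : ZMod n => ζ ^ c.val) := by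
    intro c d hcd
    have := hζ.pow_inj (ZMod.val_lt c) (ZMod.val_lt d) hcd
    exact ZMod.val_injective n this
  have hmap : ∀ c₁ c₂ c₃ c₄ : ZMod n,
      (({c₁, c₂, c₃, c₄} : Multiset (ZMod n)).map fun c => ζ ^ c.val)
        = ({ζ ^ c₁.val, ζ ^ c₂.val, ζ ^ c₃.val, ζ ^ c₄.val} : Multiset ℂ) := by
    intro c₁ c₂ c₃ c₄
    simp
  apply Multiset.map_injective hinj
  rw [hmap, hmap]
  exact hmul
end

section
/- Let n ≥ 2 be an integer with gcd(n,6) = 1, and let j, k, r be integers with r ≢ 0 (mod n), r ≢ 1 (mod n), k ≢ 1 (mod n), and k ≢ 2 (mod n). If the multiset {j, j+k+r−2, 1, 3−k−r} of residues modulo n is equal to the multiset {j+k−1, j+r, 2−k, 1−r} of residues modulo n, then 2k ≡ 3 (mod n) or 2r ≡ 1 (mod n). -/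
/-- Let `n ≥ 2` with `gcd(n,6) = 1` and `j, k, r` integers with
`r ≢ 0, 1 (mod n)` and `k ≢ 1, 2 (mod n)`. If the multisets of residues
`{j, j+k+r-2, 1, 3-k-r}` and `{j+k-1, j+r, 2-k, 1-r}` in `ZMod n` are equal, then
`2k ≡ 3 (mod n)` or `2r ≡ 1 (mod n)`. -/
theorem stmt_5 (n : ℕ) (hn : 2 ≤ n) (h6 : Nat.gcd n 6 = 1) (j k r : ℤ)
    (hr0 : ¬ r ≡ 0 [ZMOD (n : ℤ)]) (hr1 : ¬ r ≡ 1 [ZMOD (n : ℤ)])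
    (hk1 : ¬ k ≡ 1 [ZMOD (n : ℤ)]) (hk2 : ¬ k ≡ 2 [ZMOD (n : ℤ)])
    (h : ({(j : ZMod n), ((j + k + r - 2 : ℤ) : ZMod n), (1 : ZMod n),
            ((3 - k - r : ℤ) : ZMod n)} : Multiset (ZMod n)) =
         ({((j + k - 1 : ℤ) : ZMod n), ((j + r : ℤ) : ZMod n), ((2 - k : ℤ) : ZMod n),
            ((1 - r : ℤ) : ZMod n)} : Multiset (ZMod n))) :
    2 * k ≡ 3 [ZMOD (n : ℤ)] ∨ 2 * r ≡ 1 [ZMOD (n : ℤ)] := by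
  rw [show ((n:ℤ)) = ((n:ℕ):ℤ) by norm_num] at *
  rw [← ZMod.intCast_eq_intCast_iff] at hr0 hr1 hk1 hk2
  rw [← ZMod.intCast_eq_intCast_iff, ← ZMod.intCast_eq_intCast_iff]
  push_cast at hr0 hr1 hk1 hk2 h ⊢
  set a := (j : ZMod n) with ha
  set b := (k : ZMod n) with hb
  set c := (r : ZMod n) with hc
  have m1 : a ∈ ({a + b - 1, a + c, 2 - b, 1 - c} : Multiset (ZMod n)) := by
    rw [← h]; simp
  have m2 : a + b + c - 2 ∈ ({a + b - 1, a + c, 2 - b, 1 - c} : Multiset (ZMod n)) := by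
    rw [← h]; simp
  have m3 : (2 : ZMod n) - b ∈ ({a, a + b + c - 2, 1, 3 - b - c} : Multiset (ZMod n)) := by
    rw [h]; simp
  have m4 : (1 : ZMod n) - c ∈ ({a, a + b + c - 2, 1, 3 - b - c} : Multiset (ZMod n)) := by
    rw [h]; simp
  simp only [Multiset.insert_eq_cons, Multiset.mem_cons, Multiset.mem_singleton] at m1 m2 m3 m4
  rcases m1 with c1 | c2 | c3 | c4
  · exact absurd (by linear_combination -c1) hk1
  · exact absurd (by linear_combination -c2) hr0
  · -- a + b = 2
    rcases m2 with d1 | d2 | d3 | d4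
    · exact absurd (by linear_combination d1) hr1
    · exact absurd (by linear_combination d2) hk2
    · -- a + 2b + c = 4
      rcases m4 with e1 | e2 | e3 | e4
      · exact Or.inl (by linear_combination d3 + e1)
      · exact Or.inr (by linear_combination -e2 - c3)
      · exact absurd (by linear_combination -e3) hr0
      · exact absurd (by linear_combination e4) hk2
    · exact Or.inr (by linear_combination d4 - c3)
  · -- a + c = 1
    rcases m2 with d1 | d2 | d3 | d4
    · exact absurd (by linear_combination d1) hr1
    · exact absurd (by linear_combination d2) hk2
    · exact Or.inl (by linear_combination d3 - c4)
    · -- a + b + 2c = 3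
      rcases m3 with f1 | f2 | f3 | f4
      · exact Or.inl (by linear_combination d4 - 2 * c4 - f1)
      · exact Or.inl (by linear_combination -f2 - c4)
      · exact absurd (by linear_combination -f3) hk1
      · exact absurd (by linear_combination f4) hr1
end

section
/- Let n ≥ 2 be an integer with gcd(n,6) = 1, and let j, k, r be integers with r ≢ 0 (mod n), r ≢ 1 (mod n), k ≢ 1 (mod n), and k ≢ 2 (mod n). Then the multiset {j, j+k+r−2, 2−k, 1−r} of residues modulo n is not equal to the multiset {j+k−1, j+r, 1, 2−k−r} of residues modulo n. -/
/-- Let `n ≥ 2` with `gcd(n,6) = 1` and `j, k, r` integers with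
`r ≢ 0, 1 (mod n)` and `k ≢ 1, 2 (mod n)`. Then the multisets of residues
`{j, j+k+r-2, 2-k, 1-r}` and `{j+k-1, j+r, 1, 2-k-r}` in `ZMod n` are not equal. -/
theorem stmt_6 (n : ℕ) (hn : 2 ≤ n) (h6 : Nat.gcd n 6 = 1) (j k r : ℤ)
    (hr0 : ¬ r ≡ 0 [ZMOD (n : ℤ)]) (hr1 : ¬ r ≡ 1 [ZMOD (n : ℤ)])
    (hk1 : ¬ k ≡ 1 [ZMOD (n : ℤ)]) (hk2 : ¬ k ≡ 2 [ZMOD (n : ℤ)]) :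
    ({(j : ZMod n), ((j + k + r - 2 : ℤ) : ZMod n), ((2 - k : ℤ) : ZMod n),
        ((1 - r : ℤ) : ZMod n)} : Multiset (ZMod n)) ≠
      ({((j + k - 1 : ℤ) : ZMod n), ((j + r : ℤ) : ZMod n), (1 : ZMod n),
        ((2 - k - r : ℤ) : ZMod n)} : Multiset (ZMod n)) := by
  haveI : Fact (1 < n) := ⟨hn⟩
  intro h
  have hs := congrArg Multiset.sum h
  simp only [Multiset.insert_eq_cons, Multiset.sum_cons, Multiset.sum_singleton] at hs
  push_cast at hs
  have : (1 : ZMod n) = 0 := by linear_combination -hs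
  exact one_ne_zero this
end

section
/- Let n ≥ 1 and let a_0,…,a_{n−1} be integers. Let C be the n×n integer circulant matrix with first row (a_0,…,a_{n−1}), and let p(t) = a_0 + a_1 t + ⋯ + a_{n−1} t^{n−1}. Then det C ∈ {1, −1} if and only if for every divisor d of n, p(ζ_d) is a unit of the ring ℤ[ζ_d], where ζ_d ∈ ℂ is a primitive dth root of unity. -/
/-!
The matrix in the statement is `(Matrix.circulant a)ᵀ`. For every `n`th root of unity `ζ` the
vector of powers `(ζ ^ j)ⱼ` is a left eigenvector of `circulant a` with eigenvalue `p(ζ)`.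

If `det = ±1`, the inverse of the circulant matrix has integer entries; applying it to the
eigenvector exhibits `p(ζ)⁻¹` as an integer combination of powers of `ζ`.

Conversely, the eigenvectors for the powers of a primitive `n`th root `ω` form a Vandermonde
matrix, so `det = ∏ₖ p(ωᵏ)`. Each `ωᵏ` is a primitive root of a divisor of `n`, so every factor
has an inverse that is an algebraic integer; hence `det⁻¹` is a rational algebraic integer,
i.e. an integer.
-/

open Matrix

theorem Int.isUnit_of_mul_eq_one_of_isIntegral {K : Type*} [Field K] [CharZero K] {m : ℤ}
    {u : K} (hu : IsIntegral ℤ u) (hmu : (m : K) * u = 1) : IsUnit m := by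
  have hu' : algebraMap ℚ K (m : ℚ)⁻¹ = u := by
    rw [map_inv₀, map_intCast, ← mul_eq_one_iff_inv_eq₀ (left_ne_zero_of_mul_eq_one hmu), hmu]
  rw [← hu', isIntegral_algebraMap_iff (algebraMap ℚ K).injective] at hu
  obtain ⟨k, hk⟩ := IsIntegrallyClosed.isIntegral_iff.mp hu
  refine IsUnit.of_mul_eq_one k (Int.cast_injective (α := ℚ) ?_)
  have hm : (m : ℚ) ≠ 0 := by rintro h; simp [Int.cast_eq_zero.mp h] at hmu
  rw [algebraMap_int_eq, eq_intCast] at hk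
  push_cast
  rw [hk, mul_inv_cancel₀ hm]

namespace Matrix

variable {R : Type*} [CommRing R] {n : ℕ} [NeZero n]

theorem vecMul_circulant_powers (a : Fin n → R) {ζ : R} (hζ : ζ ^ n = 1) :
    (fun j : Fin n => ζ ^ (j : ℕ)) ᵥ* circulant a =
      (∑ i, a i * ζ ^ (i : ℕ)) • fun j : Fin n => ζ ^ (j : ℕ) := by
  ext j
  have hpow (m : Fin n) : ζ ^ ((j + m : Fin n) : ℕ) = ζ ^ (j : ℕ) * ζ ^ (m : ℕ) := by
    rw [Fin.val_add, ← pow_eq_pow_mod _ hζ, pow_add]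
  simp only [vecMul, dotProduct, circulant_apply, Pi.smul_apply, smul_eq_mul]
  rw [← Equiv.sum_comp (Equiv.addLeft j)]
  simp only [Equiv.coe_addLeft, add_sub_cancel_left, hpow, Finset.sum_mul]
  exact Finset.sum_congr rfl fun _ _ => by ring

theorem det_circulant_eq_prod [IsDomain R] (a : Fin n → R) {ω : R} (hω : IsPrimitiveRoot ω n) :
    (circulant a).det = ∏ k : Fin n, ∑ i, a i * (ω ^ (k : ℕ)) ^ (i : ℕ) := by
  set V := vandermonde fun k : Fin n => ω ^ (k : ℕ)
  have hVC : V * circulant a =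
      diagonal (fun k : Fin n => ∑ i, a i * (ω ^ (k : ℕ)) ^ (i : ℕ)) * V := by
    ext k j
    have hk : (ω ^ (k : ℕ)) ^ n = 1 := by rw [pow_right_comm, hω.pow_eq_one, one_pow]
    have h := congrFun (vecMul_circulant_powers a hk) j
    simp only [vecMul, dotProduct, Pi.smul_apply, smul_eq_mul] at h
    rw [diagonal_mul, mul_apply]
    simpa [V, vandermonde_apply] using h
  have hV : V.det ≠ 0 :=
    det_vandermonde_ne_zero_iff.mpr fun x y h => Fin.ext (hω.pow_inj x.isLt y.isLt h)
  have hdet := congrArg det hVC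
  rw [det_mul, det_mul, det_diagonal, mul_comm V.det] at hdet
  exact mul_right_cancel₀ hV hdet

theorem exists_mul_eq_one_mem_closure_of_isUnit_det_circulant {a : Fin n → ℤ}
    (ha : IsUnit (circulant a).det) {ζ : R} (hζ : ζ ^ n = 1) :
    ∃ u ∈ Subring.closure ({ζ} : Set R), (∑ i, (a i : R) * ζ ^ (i : ℕ)) * u = 1 := by
  set v : Fin n → R := fun j => ζ ^ (j : ℕ)
  set N := (Int.castRingHom R).mapMatrix (circulant a)⁻¹
  have hCN : circulant (fun i => (a i : R)) * N = 1 := by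
    change (Int.castRingHom R).mapMatrix (circulant a) * N = 1
    rw [← map_mul, mul_nonsing_inv _ ha, map_one]
  refine ⟨(v ᵥ* N) 0, ?_, ?_⟩
  · simp only [vecMul, dotProduct, N, RingHom.mapMatrix_apply, map_apply, eq_intCast]
    have hζmem : ζ ∈ Subring.closure ({ζ} : Set R) := Subring.subset_closure rfl
    exact Subring.sum_mem _ fun i _ => Subring.mul_mem _ (pow_mem hζmem _) (intCast_mem _ _)
  · have h := congrArg (· ᵥ* N) (vecMul_circulant_powers (fun i => (a i : R)) hζ)
    simp only [vecMul_vecMul, hCN, vecMul_one, smul_vecMul] at h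
    simpa [v] using (congrFun h 0).symm

end Matrix

/-- The `n×n` integer circulant matrix with first row `(a₀,…,a_{n-1})`
(entry `(i,j)` equal to `a_{(j-i) mod n}`) has determinant `±1` if and only if for every
divisor `d` of `n` and every primitive `d`th root of unity `ζ_d ∈ ℂ`, the value
`p(ζ_d) = ∑ i a_i ζ_d^i` is a unit of the subring `ℤ[ζ_d]` of `ℂ`. -/
theorem stmt_8 (n : ℕ) (hn : 1 ≤ n) (a : Fin n → ℤ) :
    (Matrix.det (Matrix.of fun i j : Fin n => a (j - i)) = 1 ∨
     Matrix.det (Matrix.of fun i j : Fin n => a (j - i)) = -1) ↔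
    ∀ d : ℕ, d ∣ n → ∀ ζd : ℂ, IsPrimitiveRoot ζd d →
      ∃ u ∈ Subring.closure ({ζd} : Set ℂ),
        (∑ i : Fin n, (a i : ℂ) * ζd ^ (i : ℕ)) * u = 1 := by
  have : NeZero n := ⟨by omega⟩
  have hC : (Matrix.of fun i j : Fin n => a (j - i)) = (circulant a)ᵀ := rfl
  rw [hC, det_transpose, ← Int.isUnit_iff]
  refine ⟨fun ha d hd ζ hζ => exists_mul_eq_one_mem_closure_of_isUnit_det_circulant ha
    ((hζ.pow_eq_one_iff_dvd n).mpr hd), fun h => ?_⟩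
  obtain ⟨ω, hω⟩ : ∃ ω : ℂ, IsPrimitiveRoot ω n :=
    ⟨_, Complex.isPrimitiveRoot_exp n (NeZero.ne n)⟩
  have hinv (k : Fin n) : ∃ u : ℂ, IsIntegral ℤ u ∧
      (∑ i, (a i : ℂ) * (ω ^ (k : ℕ)) ^ (i : ℕ)) * u = 1 := by
    have hk : (ω ^ (k : ℕ)) ^ n = 1 := by rw [pow_right_comm, hω.pow_eq_one, one_pow]
    obtain ⟨u, hu, hpu⟩ := h _ (orderOf_dvd_of_pow_eq_one hk) _ (IsPrimitiveRoot.orderOf _)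
    refine ⟨u, IsIntegral.of_mem_closure' _ ?_ u hu, hpu⟩
    rintro _ rfl
    exact (hω.isIntegral (NeZero.pos n)).pow _
  choose u hu hpu using hinv
  refine Int.isUnit_of_mul_eq_one_of_isIntegral
    (IsIntegral.prod (s := Finset.univ) u fun k _ => hu k) ?_
  rw [Int.cast_det, map_circulant, det_circulant_eq_prod _ hω, ← Finset.prod_mul_distrib]
  simp [hpu]
end

section
/- Let n > 1 be an integer, let ζ ∈ ℂ be a primitive nth root of unity, and let s(t) be a polynomial with integer coefficients. If s(ζ) is a unit in the ring ℤ[ζ], then there exist an integer j and ε ∈ {1, −1} such that ε·ζ^j·s(ζ) = s(ζ^{−1}). -/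
/-!
Let `v` be the inverse of `s(ζ)` in `ℤ[ζ]` and `α = s(ζ⁻¹) v`, an algebraic integer of the
cyclotomic field `K = ℚ(ζ)`. Every complex embedding `φ` of `K` sends `ζ` to a root of unity,
so `φ(s(ζ⁻¹)) = conj φ(s(ζ))` and `|φ α| = |φ(s(ζ) v)| = 1`. By Kronecker's theorem `α` is a
root of unity, and the roots of unity of `K` are the `±ζ^j`: a primitive `L`-th root in `K`,
`n ∣ L`, forces `totient L = totient n` (both are `[K : ℚ]`), hence `L = n`, or `L = 2n` with
`n` odd.
-/

open Polynomial

theorem IsPrimitiveRoot.exists_eq_pow_or_eq_neg_pow_of_pow_two_mul_eq_one {R : Type*}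
    [CommRing R] [IsDomain R] {n : ℕ} [NeZero n] {ζ : R} (hζ : IsPrimitiveRoot ζ n)
    (hn : Odd n) {α : R} (hα : α ^ (2 * n) = 1) : ∃ i : ℕ, α = ζ ^ i ∨ α = -ζ ^ i := by
  have hsq : (α ^ n) ^ 2 = 1 := by rw [← pow_mul, mul_comm, hα]
  rcases sq_eq_one_iff.mp hsq with h | h
  · obtain ⟨i, -, hi⟩ := hζ.eq_pow_of_pow_eq_one h
    exact ⟨i, Or.inl hi.symm⟩
  · obtain ⟨i, -, hi⟩ := hζ.eq_pow_of_pow_eq_one (ξ := -α) (by rw [hn.neg_pow, h, neg_neg])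
    exact ⟨i, Or.inr (by rw [hi, neg_neg])⟩

theorem IsCyclotomicExtension.Rat.exists_eq_pow_or_eq_neg_pow {n : ℕ} [NeZero n] {K : Type*}
    [Field K] [CharZero K] [IsCyclotomicExtension {n} ℚ K] {ζ : K} (hζ : IsPrimitiveRoot ζ n)
    {α : K} (hα : IsOfFinOrder α) : ∃ i : ℕ, α = ζ ^ i ∨ α = -ζ ^ i := by
  set L := n.lcm (orderOf α)
  have : NeZero L := ⟨Nat.lcm_ne_zero (NeZero.ne n) hα.orderOf_pos.ne'⟩
  have hαL : α ^ L = 1 := orderOf_dvd_iff_pow_eq_one.mp (Nat.dvd_lcm_right _ _)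
  have : IsCyclotomicExtension {L} ℚ K := by
    have := ‹IsCyclotomicExtension {n} ℚ K›.union_of_isPrimitiveRoot _ _ _
      (hζ.pow_mul_pow_lcm (IsPrimitiveRoot.orderOf α) (NeZero.ne n) hα.orderOf_pos.ne')
    rwa [Set.union_comm, ← IsCyclotomicExtension.iff_union_of_dvd] at this
    exact ⟨L, rfl, NeZero.ne L, Nat.dvd_lcm_left _ _⟩
  have htot : n.totient = L.totient :=
    (IsCyclotomicExtension.Rat.finrank n K).symm.trans (IsCyclotomicExtension.Rat.finrank L K)
  rcases (Nat.eq_or_eq_of_totient_eq_totient (Nat.dvd_lcm_left _ _) htot : n = L ∨ 2 * n = L)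
    with h | h
  · obtain ⟨i, -, hi⟩ := hζ.eq_pow_of_pow_eq_one (h ▸ hαL)
    exact ⟨i, Or.inl hi.symm⟩
  · have hn : Odd n := by
      refine Nat.not_even_iff_odd.mp fun he => ?_
      rw [← h, Nat.totient_two_mul_of_even he] at htot
      exact (Nat.totient_pos.mpr (NeZero.pos n)).ne' (by omega)
    exact hζ.exists_eq_pow_or_eq_neg_pow_of_pow_two_mul_eq_one hn (h ▸ hαL)

theorem norm_aeval_inv_eq_norm_aeval {z : ℂ} (hz : ‖z‖ = 1) (s : ℤ[X]) :
    ‖aeval z⁻¹ s‖ = ‖aeval z s‖ := by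
  rw [Complex.inv_eq_conj hz, ← RCLike.norm_conj (aeval z s)]
  exact congrArg _ (aeval_algHom_apply (starRingEnd ℂ).toIntAlgHom z s)

theorem IsIntegral.aeval {A : Type*} [CommRing A] {x : A} (hx : IsIntegral ℤ x) (s : ℤ[X]) :
    IsIntegral ℤ (aeval x s) :=
  adjoin_le_integralClosure hx (aeval_mem_adjoin_singleton ℤ x)

theorem IsPrimitiveRoot.exists_aeval_inv_eq_of_isIntegral {n : ℕ} [NeZero n] {K : Type*}
    [Field K] [NumberField K] [IsCyclotomicExtension {n} ℚ K] {ζ : K} (hζ : IsPrimitiveRoot ζ n)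
    (s : ℤ[X]) {v : K} (hv : IsIntegral ℤ v) (huv : aeval ζ s * v = 1) :
    ∃ i : ℕ, aeval ζ⁻¹ s = ζ ^ i * aeval ζ s ∨ aeval ζ⁻¹ s = -ζ ^ i * aeval ζ s := by
  set α := aeval ζ⁻¹ s * v
  have hαint : IsIntegral ℤ α := ((hζ.inv.isIntegral (NeZero.pos n)).aeval s).mul hv
  have hαnorm (φ : K →+* ℂ) : ‖φ α‖ = 1 := by
    have hφζ : ‖φ ζ‖ = 1 :=
      Complex.norm_eq_one_of_pow_eq_one (by rw [← map_pow, hζ.pow_eq_one, map_one]) (NeZero.ne n)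
    have hφ (x : K) : φ (aeval x s) = aeval (φ x) s := (aeval_algHom_apply φ.toIntAlgHom x s).symm
    rw [map_mul, norm_mul, hφ, map_inv₀, norm_aeval_inv_eq_norm_aeval hφζ, ← hφ, ← norm_mul,
      ← map_mul, huv, map_one, norm_one]
  obtain ⟨m, hm, hαm⟩ := NumberField.Embeddings.pow_eq_one_of_norm_eq_one K ℂ hαint hαnorm
  have hα : aeval ζ⁻¹ s = α * aeval ζ s := by rw [mul_right_comm, mul_assoc, huv, mul_one]
  obtain ⟨i, hi | hi⟩ :=
    IsCyclotomicExtension.Rat.exists_eq_pow_or_eq_neg_pow hζ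
      (isOfFinOrder_iff_pow_eq_one.mpr ⟨m, hm, hαm⟩)
  · exact ⟨i, Or.inl (hi ▸ hα)⟩
  · exact ⟨i, Or.inr (hi ▸ hα)⟩

open IntermediateField in
theorem IsPrimitiveRoot.isCyclotomicExtension_adjoin_simple {F L : Type*} [Field F] [Field L]
    [Algebra F L] {n : ℕ} [NeZero n] {ζ : L} (hζ : IsPrimitiveRoot ζ n) :
    IsCyclotomicExtension {n} F F⟮ζ⟯ := by
  change IsCyclotomicExtension {n} F F⟮ζ⟯.toSubalgebra
  rw [adjoin_simple_toSubalgebra_of_isAlgebraic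
    (hζ.isIntegral (NeZero.pos n)).tower_top.isAlgebraic]
  exact hζ.adjoin_isCyclotomicExtension F

open IntermediateField in
/-- (Odoni's criterion.) Let `n > 1`, `ζ ∈ ℂ` a primitive `n`th root of
unity, and `s` a polynomial with integer coefficients. If `s(ζ)` is a unit of the subring
`ℤ[ζ]` of `ℂ`, then there are an integer `j` and `ε = ±1` with `ε ζ^j s(ζ) = s(ζ⁻¹)`. -/
theorem stmt_9 (n : ℕ) (hn : 1 < n) (ζ : ℂ) (hζ : IsPrimitiveRoot ζ n) (s : Polynomial ℤ)
    (hu : ∃ u ∈ Subring.closure ({ζ} : Set ℂ), (Polynomial.aeval ζ s) * u = 1) :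
    ∃ (j : ℤ) (ε : ℂ), (ε = 1 ∨ ε = -1) ∧
      ε * ζ ^ j * Polynomial.aeval ζ s = Polynomial.aeval ζ⁻¹ s := by
  obtain ⟨v, hv, huv⟩ := hu
  have : NeZero n := ⟨by omega⟩
  have : IsCyclotomicExtension {n} ℚ ℚ⟮ζ⟯ := hζ.isCyclotomicExtension_adjoin_simple
  have : NumberField ℚ⟮ζ⟯ := IsCyclotomicExtension.numberField {n} ℚ _
  have hcl : Subring.closure {ζ} ≤ ℚ⟮ζ⟯.toSubring :=
    Subring.closure_le.mpr (by simp)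
  set vK : ℚ⟮ζ⟯ := ⟨v, hcl hv⟩
  have hζK : IsPrimitiveRoot (AdjoinSimple.gen ℚ ζ) n :=
    IsPrimitiveRoot.coe_submonoidClass_iff.mp hζ
  have hvint : IsIntegral ℤ v :=
    IsIntegral.of_mem_closure' _ (by simp [hζ.isIntegral (NeZero.pos n)]) v hv
  have hvK : IsIntegral ℤ vK :=
    (isIntegral_algHom_iff (ℚ⟮ζ⟯.val.restrictScalars ℤ) Subtype.val_injective).mp hvint
  have hval (x : ℚ⟮ζ⟯) : (aeval x s : ℂ) = aeval (x : ℂ) s :=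
    (aeval_algHom_apply (ℚ⟮ζ⟯.val.restrictScalars ℤ) x s).symm
  obtain ⟨i, hi | hi⟩ :=
    hζK.exists_aeval_inv_eq_of_isIntegral s hvK (Subtype.ext (by simpa [hval] using huv))
  · refine ⟨i, 1, Or.inl rfl, ?_⟩
    simpa [hval] using (congrArg ((↑) : ℚ⟮ζ⟯ → ℂ) hi).symm
  · refine ⟨i, -1, Or.inr rfl, ?_⟩
    simpa [hval] using (congrArg ((↑) : ℚ⟮ζ⟯ → ℂ) hi).symm
end

section
/- Let n ≥ 2, k, q ≥ 1, and r ≥ s ≥ 1 be integers with gcd(n, k−1, q) = 1, and suppose that q(r−s) ≡ 2(k−1) (mod n) or q(r+s) ≡ 0 (mod n) (i.e., P(r,n,k,s,q) is of type Z̃). Then P(r,n,k,s,q) is perfect if and only if |r−s| = 1, gcd(n,q) = 1, and gcd(k−1−qr, n) = 1. -/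
def cycWord (n : ℕ) (j : ℕ) (w : FreeGroup (ZMod n)) : FreeGroup (ZMod n) :=
  FreeGroup.map (fun i => i + (j : ZMod n)) w

def cycRelators (n : ℕ) (w : FreeGroup (ZMod n)) : Set (FreeGroup (ZMod n)) :=
  {u | ∃ j < n, u = cycWord n j w}

def Gn (n : ℕ) (w : FreeGroup (ZMod n)) : Type := PresentedGroup (cycRelators n w)

instance (n : ℕ) (w : FreeGroup (ZMod n)) : Group (Gn n w) :=
  inferInstanceAs (Group (PresentedGroup (cycRelators n w)))

def Pword (r n k s q : ℕ) : FreeGroup (ZMod n) :=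
  ((List.range r).map (fun i => FreeGroup.of ((i * q : ℕ) : ZMod n))).prod *
  (((List.range s).map (fun i => FreeGroup.of (((k - 1) + i * q : ℕ) : ZMod n))).prod)⁻¹

def Pgroup (r n k s q : ℕ) : Type := Gn n (Pword r n k s q)

instance (r n k s q : ℕ) : Group (Pgroup r n k s q) :=
  inferInstanceAs (Group (Gn n (Pword r n k s q)))

/-!
The abelianization of a cyclically presented group `G_n(w)` is `ℤ[C_n] / (f)`, where `f` is the
image of `w` under `x_i ↦ t^i`; so `G_n(w)` is perfect iff `f` is a unit of `ℤ[C_n]`, i.e. iff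
`f(ζ) ≠ 0` for every `n`-th root of unity `ζ` in every field. For the Prishchepov word
`(ζ^q - 1) f(ζ) = (ζ^{qr} - 1) - ζ^{k-1} (ζ^{qs} - 1)`.

Each condition is forced by a zero of `f`: at `ζ = 1` in `ZMod p` for `p ∣ r - s`; for a prime
`p ∣ gcd(n, q)`, at a `p`-th root of unity `ζ` in `ZMod ℓ` with `ζ^{k-1} = (s+1)/s`, where
`ℓ ∣ (s+1)^p - s^p`; for a prime `p ∣ gcd(k-1-qr, n)`, at a primitive `p`-th root of unity in
characteristic `2`. Conversely, under the type `Z̃` condition a zero `ζ ≠ 1` of `f` satisfies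
`ζ^{k-1} = -ζ^{qr}`, so the order of `ζ` divides both the odd number `n` and `2(k-1-qr)`.
-/

open AddMonoidAlgebra Finset

universe u

theorem isUnit_iff_forall_map_ne_zero {A : Type u} [CommRing A] {x : A} :
    IsUnit x ↔ ∀ (K : Type u) [Field K] (χ : A →+* K), χ x ≠ 0 := by
  refine ⟨fun hx K _ χ => (hx.map χ).ne_zero, fun h => ?_⟩
  by_contra hx
  obtain ⟨m, hm, hxm⟩ := exists_max_ideal_of_mem_nonunits hx
  let := Ideal.Quotient.field m
  exact h _ (Ideal.Quotient.mk m) (Ideal.Quotient.eq_zero_iff_mem.mpr hxm)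

lemma exists_pow_eq_of_coprime {M : Type*} [Monoid M] {η : M} {p m : ℕ} (hη : η ^ p = 1)
    (hm : m.Coprime p) : ∃ ζ : M, ζ ^ p = 1 ∧ ζ ^ m = η := by
  obtain ⟨c, hc⟩ := exists_pow_eq_self_of_coprime
    (hm.coprime_dvd_right (orderOf_dvd_of_pow_eq_one hη))
  refine ⟨η ^ c, by rw [← pow_mul, mul_comm, pow_mul, hη, one_pow], ?_⟩
  rwa [← pow_mul, mul_comm, pow_mul]

lemma pow_add_one_lt_succ_pow {s p : ℕ} (hs : 1 ≤ s) (hp : 2 ≤ p) :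
    s ^ p + 1 < (s + 1) ^ p := by
  obtain ⟨m, rfl⟩ : ∃ m, p = m + 2 := ⟨p - 2, by omega⟩
  have h1 : s ^ m ≤ (s + 1) ^ m := Nat.pow_le_pow_left (by omega) m
  have h2 : 1 ≤ s ^ m := Nat.one_le_pow _ _ hs
  simp only [pow_add]
  nlinarith

lemma exists_prime_succ_pow_eq_pow {s p : ℕ} (hs : 1 ≤ s) (hp : 2 ≤ p) :
    ∃ l, l.Prime ∧ (s : ZMod l) ≠ 0 ∧ ((s + 1 : ℕ) : ZMod l) ^ p = (s : ZMod l) ^ p := by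
  have hle : s ^ p ≤ (s + 1) ^ p := Nat.pow_le_pow_left (by omega) p
  obtain ⟨l, hl, hlN⟩ := Nat.exists_prime_and_dvd
    (show (s + 1) ^ p - s ^ p ≠ 1 by have := pow_add_one_lt_succ_pow hs hp; omega)
  refine ⟨l, hl, ?_, ?_⟩
  · rw [Ne, ZMod.natCast_eq_zero_iff]
    intro hls
    have : l ∣ (s + 1) ^ p := by
      simpa [Nat.sub_add_cancel hle] using Nat.dvd_add hlN (dvd_pow hls (by omega : p ≠ 0))
    have := Nat.dvd_sub (hl.dvd_of_dvd_pow this) hls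
    simp only [Nat.add_sub_cancel_left, Nat.dvd_one] at this
    exact hl.one_lt.ne' this
  · rw [← sub_eq_zero, ← Nat.cast_pow, ← Nat.cast_pow, ← Nat.cast_sub hle,
      ZMod.natCast_eq_zero_iff]
    exact hlN

noncomputable def toGroupRing (n : ℕ) : FreeGroup (ZMod n) →* Multiplicative ℤ[ZMod n] :=
  FreeGroup.lift fun i => .ofAdd (single i 1)

@[simp]
lemma toGroupRing_of {n : ℕ} (i : ZMod n) : toGroupRing n (.of i) = .ofAdd (single i 1) :=
  FreeGroup.lift_apply_of

lemma toAdd_toGroupRing_cycWord (n j : ℕ) (w : FreeGroup (ZMod n)) :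
    (toGroupRing n (cycWord n j w)).toAdd = single (j : ZMod n) 1 * (toGroupRing n w).toAdd := by
  have : (toGroupRing n).comp (FreeGroup.map (· + (j : ZMod n))) =
      (AddMonoidHom.mulLeft (single (j : ZMod n) (1 : ℤ))).toMultiplicative.comp
        (toGroupRing n) := by
    ext i
    simp [single_mul_single, add_comm]
  exact congr(Multiplicative.toAdd ($this w))

namespace Gn

variable {n : ℕ} {w : FreeGroup (ZMod n)}

noncomputable def toQuotient (w : FreeGroup (ZMod n)) :
    PresentedGroup (cycRelators n w) →*
      Multiplicative (ℤ[ZMod n] ⧸ Ideal.span {(toGroupRing n w).toAdd}) :=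
  PresentedGroup.toGroup (f := fun i => .ofAdd (Ideal.Quotient.mk _ (single i 1))) <| by
    rintro _ ⟨j, -, rfl⟩
    have : FreeGroup.lift (fun i => .ofAdd (Ideal.Quotient.mk _ (single i 1))) =
        ((Ideal.Quotient.mk (Ideal.span {(toGroupRing n w).toAdd})).toAddMonoidHom
          |>.toMultiplicative.comp (toGroupRing n)) := by
      ext; simp
    rw [this, MonoidHom.comp_apply, AddMonoidHom.coe_toMultiplicative]
    simp [toAdd_toGroupRing_cycWord]

lemma isUnit_of_commutator_eq_top (h : commutator (PresentedGroup (cycRelators n w)) = ⊤) :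
    IsUnit (toGroupRing n w).toAdd := by
  have h0 : toQuotient w (PresentedGroup.of 0) = 1 :=
    Abelianization.commutator_subset_ker _ (h ▸ Subgroup.mem_top _)
  rw [toQuotient, PresentedGroup.toGroup.of, ofAdd_eq_one, ← one_def,
    Ideal.Quotient.eq_zero_iff_mem, Ideal.mem_span_singleton] at h0
  exact isUnit_of_dvd_one h0

lemma eq_one_of_isUnit [NeZero n] {A : Type*} [CommGroup A] (hw : IsUnit (toGroupRing n w).toAdd)
    (φ : PresentedGroup (cycRelators n w) →* A) : φ = 1 := by
  let ψ : ℤ[ZMod n] →+ Additive A :=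
    (Finsupp.liftAddHom fun i => zmultiplesHom _ (.ofMul (φ (.of i)))).comp
      coeffAddEquiv.toAddMonoidHom
  have hψ : ψ.toMultiplicativeLeft.comp (toGroupRing n) = φ.comp (PresentedGroup.mk _) := by
    ext i; simp [ψ, PresentedGroup.of]
  -- the relator `θ^j w` maps to `t^j f`, so `ψ` kills the ideal `(f)`, which is everything
  have hrel : ψ.comp (AddMonoidHom.mulRight (toGroupRing n w).toAdd) = 0 := by
    ext j
    have := congr(Additive.ofMul ($hψ (cycWord n j.val w)))
    simpa [toAdd_toGroupRing_cycWord,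
      PresentedGroup.one_of_mem (rels := cycRelators n w) ⟨j.val, j.val_lt, rfl⟩] using this
  have hψ0 : ψ = 0 := by
    ext i
    have := congr($hrel (single i 1 * ((hw.unit⁻¹ : (ℤ[ZMod n])ˣ) : ℤ[ZMod n])))
    simp only [AddMonoidHom.comp_apply, AddMonoidHom.coe_mulRight, AddMonoidHom.zero_apply] at this
    rwa [mul_assoc, IsUnit.val_inv_mul, mul_one] at this
  refine PresentedGroup.ext fun i => ?_
  simpa [ψ] using congr(Additive.toMul ($hψ0 (single i 1)))

theorem commutator_eq_top_iff [NeZero n] :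
    commutator (Gn n w) = ⊤ ↔ IsUnit (toGroupRing n w).toAdd :=
  ⟨isUnit_of_commutator_eq_top, fun hw => by
    show commutator (PresentedGroup (cycRelators n w)) = ⊤
    rw [← Abelianization.ker_of, eq_one_of_isUnit hw Abelianization.of, MonoidHom.ker_one]⟩

end Gn

section Evaluation

variable {n : ℕ} {K : Type*} [CommRing K]

noncomputable def evalRootOfUnity [NeZero n] (ζ : K) (hζ : ζ ^ n = 1) : ℤ[ZMod n] →+* K :=
  (AddMonoidAlgebra.lift ℤ K (ZMod n)
    { toFun := fun a => ζ ^ a.toAdd.val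
      map_one' := by simp
      map_mul' := fun a b => by
        rw [toAdd_mul, ZMod.val_add, ← pow_eq_pow_mod _ hζ, pow_add] }).toRingHom

lemma evalRootOfUnity_single [NeZero n] (ζ : K) (hζ : ζ ^ n = 1) (m : ℕ) :
    evalRootOfUnity ζ hζ (single (m : ZMod n) 1) = ζ ^ m := by
  simp [evalRootOfUnity, ZMod.val_natCast, ← pow_eq_pow_mod _ hζ]

lemma map_single_natCast (χ : ℤ[ZMod n] →+* K) (m : ℕ) :
    χ (single (m : ZMod n) 1) = χ (single 1 1) ^ m := by
  rw [← map_pow, single_pow, one_pow, nsmul_one]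

def prishchepovEval (k q r s : ℕ) (ζ : K) : K :=
  ∑ i ∈ range r, (ζ ^ q) ^ i - ζ ^ (k - 1) * ∑ i ∈ range s, (ζ ^ q) ^ i

lemma map_toGroupRing_Pword {k q r s : ℕ} (χ : ℤ[ZMod n] →+* K) {ζ : K}
    (hχ : ∀ m : ℕ, χ (single (m : ZMod n) 1) = ζ ^ m) :
    χ (toGroupRing n (Pword r n k s q)).toAdd = prishchepovEval k q r s ζ := by
  -- `∑ i ∈ range m, _` is a sum over `List.range m` by definition
  have hsum (m : ℕ) (g : ℕ → ℤ[ZMod n]) :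
      χ ((List.range m).map g).sum = ∑ i ∈ range m, χ (g i) :=
    map_sum χ g (range m)
  simp only [Pword, map_mul, map_inv, toAdd_mul, toAdd_inv, map_add, map_neg, map_list_prod,
    toAdd_list_sum, List.map_map, hsum, Function.comp_apply, toGroupRing_of, toAdd_ofAdd, hχ]
  simp only [prishchepovEval, mul_sum, sub_eq_add_neg, ← pow_mul, ← pow_add, mul_comm q]

lemma prishchepovEval_of_pow_eq_one {k q r s : ℕ} {ζ : K} (h : ζ ^ q = 1) :
    prishchepovEval k q r s ζ = r - ζ ^ (k - 1) * s := by
  simp [prishchepovEval, h]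

lemma sub_one_mul_prishchepovEval (k q r s : ℕ) (ζ : K) :
    (ζ ^ q - 1) * prishchepovEval k q r s ζ =
      (ζ ^ q) ^ r - 1 - ζ ^ (k - 1) * ((ζ ^ q) ^ s - 1) := by
  rw [prishchepovEval, mul_sub, mul_geom_sum, mul_left_comm, mul_geom_sum]

end Evaluation

theorem Pgroup.commutator_eq_top_iff {n : ℕ} [NeZero n] {k q r s : ℕ} :
    commutator (Pgroup r n k s q) = ⊤ ↔
      ∀ (K : Type) [Field K] (ζ : K), ζ ^ n = 1 → prishchepovEval k q r s ζ ≠ 0 := by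
  rw [show commutator (Pgroup r n k s q) = ⊤ ↔ _ from Gn.commutator_eq_top_iff,
    isUnit_iff_forall_map_ne_zero]
  constructor
  · intro h K _ ζ hζ
    rw [← map_toGroupRing_Pword _ (evalRootOfUnity_single ζ hζ)]
    exact h K _
  · intro h K _ χ
    have hχ := map_single_natCast χ
    rw [map_toGroupRing_Pword χ hχ]
    refine h K _ ?_
    rw [← hχ, ZMod.natCast_self, ← one_def, map_one]

section RootsOfUnity

variable {k q r s : ℕ} {K : Type*} [Field K] {ζ : K}

lemma prishchepovEval_eq_zero_of_eq_neg (ha : ζ ^ q ≠ 1) (hrs : (ζ ^ q) ^ (r + s) = 1)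
    (hb : ζ ^ (k - 1) = -(ζ ^ q) ^ r) : prishchepovEval k q r s ζ = 0 := by
  have h := sub_one_mul_prishchepovEval k q r s ζ
  rw [hb] at h
  refine (mul_eq_zero.mp ?_).resolve_left (sub_ne_zero.mpr ha)
  linear_combination h + hrs

lemma eq_neg_of_prishchepovEval_eq_zero (hr : r = s + 1) (ha : ζ ^ q ≠ 1)
    (htype : ζ ^ q = (ζ ^ (k - 1)) ^ 2 ∨ (ζ ^ q) ^ (r + s) = 1)
    (hE : prishchepovEval k q r s ζ = 0) : ζ ^ (k - 1) = -(ζ ^ q) ^ r := by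
  have h := sub_one_mul_prishchepovEval k q r s ζ
  rw [hE, mul_zero] at h
  subst hr
  set a := ζ ^ q
  set b := ζ ^ (k - 1)
  rcases htype with hab | hrs
  · -- with `a = b ^ 2`, `f(ζ)` is the geometric sum `∑_{j ≤ 2s} (-b) ^ j`
    have hb : b ≠ 1 := fun hb => ha (by rw [hab, hb, one_pow])
    have : (b - 1) * (b ^ (2 * s + 1) + 1) = 0 := by
      rw [hab] at h; linear_combination -h
    have hb' := (mul_eq_zero.mp this).resolve_left (sub_ne_zero.mpr hb)
    rw [hab]; linear_combination b * hb'
  · have has : a ^ s ≠ 1 := fun has => ha (by linear_combination -h + (b - a) * has)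
    have : (b + a ^ (s + 1)) * (a ^ s - 1) = 0 := by linear_combination h + hrs
    exact eq_neg_of_add_eq_zero_left ((mul_eq_zero.mp this).resolve_right (sub_ne_zero.mpr has))

end RootsOfUnity

section TypeZ

def IsTypeZ (n k q r s : ℕ) : Prop :=
  (q * (r - s) : ℤ) ≡ 2 * (k - 1) [ZMOD (n : ℤ)] ∨
    (q * (r + s) : ℤ) ≡ 0 [ZMOD (n : ℤ)]

variable {n k q r s : ℕ}

lemma IsTypeZ.pow_cases {M : Type*} [Monoid M] {ζ : M} (htype : IsTypeZ n k q r s)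
    (hk : 1 ≤ k) (hr : r = s + 1) (hζ : ζ ^ n = 1) :
    ζ ^ q = (ζ ^ (k - 1)) ^ 2 ∨ (ζ ^ q) ^ (r + s) = 1 := by
  rcases htype with hA | hB
  · left
    have : q ≡ (k - 1) * 2 [MOD n] := by
      subst hr
      rw [← Int.natCast_modEq_iff]
      push_cast [hk] at hA ⊢
      convert hA using 1 <;> ring
    rw [← pow_mul, pow_eq_pow_of_modEq this hζ]
  · right
    have : q * (r + s) ≡ 0 [MOD n] := by rw [← Int.natCast_modEq_iff]; exact_mod_cast hB
    rw [← pow_mul, pow_eq_pow_of_modEq this hζ, pow_zero]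

lemma IsTypeZ.not_two_dvd (htype : IsTypeZ n k q r s) (hnq : n.gcd q = 1) (hr : r = s + 1) :
    ¬ 2 ∣ n := by
  intro h2n
  subst hr
  rcases htype with hA | hB
  · have := (Int.natCast_dvd_natCast.mpr h2n).trans hA.dvd
    have : 2 ∣ q := by push_cast at this; omega
    exact absurd (Nat.dvd_gcd h2n this) (by rw [hnq]; norm_num)
  · have : n ∣ q * (s + 1 + s) := by exact_mod_cast Int.modEq_zero_iff_dvd.mp hB
    have := h2n.trans (Nat.Coprime.dvd_of_dvd_mul_left hnq this)
    omega

end TypeZ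

section Necessity

variable {n k q r s : ℕ}

lemma eq_succ_of_prishchepovEval_ne_zero (hrs : s ≤ r)
    (h : ∀ (K : Type) [Field K] (ζ : K), ζ ^ n = 1 → prishchepovEval k q r s ζ ≠ 0) :
    r = s + 1 := by
  by_contra hne
  obtain ⟨p, hp, hpd⟩ := Nat.exists_prime_and_dvd (show r - s ≠ 1 by omega)
  have := Fact.mk hp
  apply h (ZMod p) 1 (one_pow n)
  rw [prishchepovEval_of_pow_eq_one (one_pow q), one_pow, one_mul, ← Nat.cast_sub hrs,
    ZMod.natCast_eq_zero_iff]
  exact hpd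

lemma coprime_of_prishchepovEval_ne_zero (hs : 1 ≤ s) (hgcd : n.gcd ((k - 1).gcd q) = 1)
    (hr : r = s + 1)
    (h : ∀ (K : Type) [Field K] (ζ : K), ζ ^ n = 1 → prishchepovEval k q r s ζ ≠ 0) :
    n.gcd q = 1 := by
  by_contra hnq
  obtain ⟨p, hp, hpnq⟩ := Nat.exists_prime_and_dvd hnq
  have hpn := hpnq.trans (Nat.gcd_dvd_left n q)
  have hpq := hpnq.trans (Nat.gcd_dvd_right n q)
  have hpk : (k - 1).Coprime p := by
    refine (Nat.coprime_comm.mp ((Nat.Prime.coprime_iff_not_dvd hp).mpr fun hpk => ?_))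
    exact hp.one_lt.ne' (Nat.dvd_one.mp (hgcd ▸ Nat.dvd_gcd hpn (Nat.dvd_gcd hpk hpq)))
  obtain ⟨l, hl, hsl, hsp⟩ := exists_prime_succ_pow_eq_pow hs hp.two_le
  have := Fact.mk hl
  obtain ⟨ζ, hζp, hζk⟩ := exists_pow_eq_of_coprime (η := ((s + 1 : ℕ) : ZMod l) / s)
    (by rw [div_pow, hsp, div_self (pow_ne_zero _ hsl)]) hpk
  apply h (ZMod l) ζ (by obtain ⟨c, rfl⟩ := hpn; rw [pow_mul, hζp, one_pow])
  obtain ⟨c, rfl⟩ := hpq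
  rw [prishchepovEval_of_pow_eq_one (by rw [pow_mul, hζp, one_pow]), hζk, hr,
    div_mul_cancel₀ _ hsl, sub_self]

lemma gcd_eq_one_of_prishchepovEval_ne_zero (hk : 1 ≤ k) (hr : r = s + 1) (hnq : n.gcd q = 1)
    (htype : IsTypeZ n k q r s)
    (h : ∀ (K : Type) [Field K] (ζ : K), ζ ^ n = 1 → prishchepovEval k q r s ζ ≠ 0) :
    Int.gcd ((k : ℤ) - 1 - q * r) (n : ℤ) = 1 := by
  by_contra hg
  obtain ⟨p, hp, hpg⟩ := Nat.exists_prime_and_dvd hg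
  have hpn : p ∣ n := Int.natCast_dvd_natCast.mp ((Int.natCast_dvd_natCast.mpr hpg).trans
    (Int.gcd_dvd_right _ _))
  have hpe : (p : ℤ) ∣ (k : ℤ) - 1 - q * r := (Int.natCast_dvd_natCast.mpr hpg).trans
    (Int.gcd_dvd_left _ _)
  -- a primitive `p`-th root of unity in characteristic `2`, where `-1 = 1`
  let K := AlgebraicClosure (ZMod 2)
  have : NeZero (p : ZMod 2) := ⟨by
    rw [Ne, ZMod.natCast_eq_zero_iff]
    exact fun h2p => htype.not_two_dvd hnq hr (h2p.trans hpn)⟩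
  obtain ⟨ζ, hζ⟩ := HasEnoughRootsOfUnity.exists_primitiveRoot K p
  have hζn : ζ ^ n = 1 := (hζ.pow_eq_one_iff_dvd n).mpr hpn
  have ha : ζ ^ q ≠ 1 := fun hq =>
    hp.one_lt.ne' (Nat.dvd_one.mp (hnq ▸ Nat.dvd_gcd hpn ((hζ.pow_eq_one_iff_dvd q).mp hq)))
  have hb : ζ ^ (k - 1) = (ζ ^ q) ^ r := by
    rw [← pow_mul]
    refine pow_eq_pow_of_modEq ?_ hζ.pow_eq_one
    rw [← Int.natCast_modEq_iff, Int.modEq_iff_dvd]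
    push_cast [hk]
    simpa using hpe.neg_right
  refine h K ζ hζn (prishchepovEval_eq_zero_of_eq_neg ha ?_ (by rw [CharTwo.neg_eq, hb]))
  rcases htype.pow_cases hk hr hζn with hab | hrs
  · rw [hb, ← pow_mul] at hab
    refine mul_right_cancel₀ (pow_ne_zero q (hζ.ne_zero hp.ne_zero)) ?_
    rw [one_mul, ← pow_succ, show r + s + 1 = r * 2 by omega, ← hab]
  · exact hrs

end Necessity

lemma prishchepovEval_ne_zero {n k q r s : ℕ} (hn : n ≠ 0) (hk : 1 ≤ k) (hr : r = s + 1)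
    (hnq : n.gcd q = 1) (he : Int.gcd ((k : ℤ) - 1 - q * r) (n : ℤ) = 1)
    (htype : IsTypeZ n k q r s)
    (K : Type) [Field K] (ζ : K) (hζ : ζ ^ n = 1) : prishchepovEval k q r s ζ ≠ 0 := by
  intro hE
  have ha : ζ ^ q ≠ 1 := by
    intro hq
    have hζ1 : ζ = 1 := by simpa [hnq] using pow_gcd_eq_one.mpr ⟨hζ, hq⟩
    rw [prishchepovEval_of_pow_eq_one hq, hζ1, hr] at hE
    simp at hE
  have hb := eq_neg_of_prishchepovEval_eq_zero hr ha (htype.pow_cases hk hr hζ) hE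
  -- squaring `hb` shows that the order of `ζ` divides `2 (k - 1 - q r)`, hence divides `2`
  have hsq : ζ ^ (2 * (k - 1)) = ζ ^ (2 * (q * r)) := by
    rw [mul_comm 2, mul_comm 2, pow_mul, pow_mul, hb, pow_mul, neg_sq]
  have hfin : IsOfFinOrder ζ := isOfFinOrder_iff_pow_eq_one.mpr ⟨n, Nat.pos_of_ne_zero hn, hζ⟩
  have hdn : orderOf ζ ∣ n := orderOf_dvd_of_pow_eq_one hζ
  have hd2 : orderOf ζ ∣ 2 := by
    have h2e := Nat.modEq_iff_dvd.mp ((hfin.pow_eq_pow_iff_modEq).mp hsq)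
    have hcop : IsCoprime (orderOf ζ : ℤ) ((k : ℤ) - 1 - q * r) :=
      (Int.isCoprime_iff_gcd_eq_one.mpr he).symm.of_isCoprime_of_dvd_left
        (Int.natCast_dvd_natCast.mpr hdn)
    refine Int.natCast_dvd_natCast.mp (hcop.dvd_of_dvd_mul_right ?_)
    push_cast [hk] at h2e
    convert h2e.neg_right using 1
    ring
  rcases (Nat.dvd_prime Nat.prime_two).mp hd2 with hd | hd
  · exact ha (by rw [orderOf_eq_one_iff.mp hd, one_pow])
  · exact htype.not_two_dvd hnq hr (hd ▸ hdn)

theorem stmt_10_general (n k q r s : ℕ) (hn : 2 ≤ n) (hk : 1 ≤ k) (hs : 1 ≤ s)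
    (hrs : s ≤ r) (hgcd : Nat.gcd n (Nat.gcd (k - 1) q) = 1)
    (htype : (q * (r - s) : ℤ) ≡ 2 * (k - 1) [ZMOD (n : ℤ)] ∨
             (q * (r + s) : ℤ) ≡ 0 [ZMOD (n : ℤ)]) :
    commutator (Pgroup r n k s q) = ⊤ ↔
      (|(r : ℤ) - s| = 1 ∧ Nat.gcd n q = 1 ∧ Int.gcd ((k : ℤ) - 1 - q * r) (n : ℤ) = 1) := by
  have : NeZero n := ⟨by omega⟩
  rw [Pgroup.commutator_eq_top_iff]
  constructor
  · intro h
    have hr := eq_succ_of_prishchepovEval_ne_zero hrs h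
    have hnq := coprime_of_prishchepovEval_ne_zero hs hgcd hr h
    exact ⟨by simp [hr], hnq, gcd_eq_one_of_prishchepovEval_ne_zero hk hr hnq htype h⟩
  · rintro ⟨hrs1, hnq, he⟩
    have hr : r = s + 1 := by
      rcases abs_eq zero_le_one |>.mp hrs1 with h | h <;> omega
    exact prishchepovEval_ne_zero (by omega) hk hr hnq he htype

/-- (Theorem C of [MR4315549].) For `n ≥ 2`, `k, q ≥ 1`, `r ≥ s ≥ 1` with
`gcd(n, k-1, q) = 1`, if `P(r,n,k,s,q)` is of type `Z̃` (i.e. `q(r-s) ≡ 2(k-1)` or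
`q(r+s) ≡ 0` mod `n`), then `P(r,n,k,s,q)` is perfect iff `|r-s| = 1`, `gcd(n,q) = 1`
and `gcd(k-1-qr, n) = 1`. -/
theorem stmt_10 (n k q r s : ℕ) (hn : 2 ≤ n) (hk : 1 ≤ k) (hq : 1 ≤ q) (hs : 1 ≤ s)
    (hrs : s ≤ r) (hgcd : Nat.gcd n (Nat.gcd (k - 1) q) = 1)
    (htype : (q * (r - s) : ℤ) ≡ 2 * (k - 1) [ZMOD (n : ℤ)] ∨
             (q * (r + s) : ℤ) ≡ 0 [ZMOD (n : ℤ)]) :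
    commutator (Pgroup r n k s q) = ⊤ ↔
      (|(r : ℤ) - s| = 1 ∧ Nat.gcd n q = 1 ∧ Int.gcd ((k : ℤ) - 1 - q * r) (n : ℤ) = 1) :=
  stmt_10_general n k q r s hn hk hs hrs hgcd htype
end

section
/- Let n ≥ 2, k, q ≥ 1, and r ≥ s ≥ 1 be integers with gcd(n, k−1, q) = 1, and suppose that q(r−s) ≡ 2(k−1) (mod n) (i.e., P(r,n,k,s,q) is of type Z). Then P(r,n,k,s,q) is the trivial group if and only if |r−s| = 1 and either k ≡ 1 (mod n) or k ≡ 1 + q(r−s) (mod n). -/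
/-!
Under the hypotheses the right-hand side never holds: with `q ≡ 2(k-1)` it forces `n ∣ k - 1`
and `n ∣ q`. So the content is that `P(r,n,k,s,q)` is never trivial.

If `r - s ≠ 1`, sending every generator to `1 ∈ ℤ/(r-s)` gives a nontrivial quotient.
If `r = s + 1`, then `d = k - 1` is a unit mod `n` and `q ≡ 2d`. For `T` with `T ^ n = 1`, the
assignment `x_i ↦ T^i X T^{-i}` kills every shifted relator once it kills `w`. Writing `M = T^d`
and `Z = X M²`, this becomes the single equation `Z^{s+1} = M Z^s M`, and `X ≠ 1` means
`Z ≠ M²`. Such pairs exist in the dihedral group of order `2(2s+1)` when `n` is even (`M` a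
reflection, `Z` a rotation). When `n` is odd they exist in `SL(2, ℂ)`: take `Z = diag(μ, μ⁻¹)`
with `μ^{2s+1} = -1`, and `M` with eigenvalues `ζ^{±1}` for a primitive `n`-th root of unity `ζ`
and with `tr (M Z^s) = 0`. Then `(M Z^s)² = -1 = Z^{2s+1}`.
-/

open scoped MatrixGroups

section Twist

variable {G : Type*} [Group G] {n : ℕ} {T X : G}

def twist (n : ℕ) (T X : G) (i : ZMod n) : G := T ^ i.val * X * (T ^ i.val)⁻¹

theorem twist_natCast (hT : T ^ n = 1) (m : ℕ) : twist n T X m = T ^ m * X * (T ^ m)⁻¹ := by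
  rw [twist, ZMod.val_natCast, ← pow_eq_pow_mod m hT]

theorem twist_add_natCast [NeZero n] (hT : T ^ n = 1) (i : ZMod n) (j : ℕ) :
    twist n T X (i + j) = T ^ j * twist n T X i * (T ^ j)⁻¹ := by
  have hij : i + j = ((j + i.val : ℕ) : ZMod n) := by simp [add_comm]
  rw [hij, twist_natCast hT, twist, pow_add]
  group

theorem lift_twist_cycWord [NeZero n] (hT : T ^ n = 1) (j : ℕ) (w : FreeGroup (ZMod n)) :
    FreeGroup.lift (twist n T X) (cycWord n j w) =
      T ^ j * FreeGroup.lift (twist n T X) w * (T ^ j)⁻¹ := by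
  have hcomp : (FreeGroup.lift (twist n T X)).comp (FreeGroup.map (· + (j : ZMod n))) =
      (MulAut.conj (T ^ j)).toMonoidHom.comp (FreeGroup.lift (twist n T X)) :=
    FreeGroup.ext_hom _ _ fun i => by
      simp only [MonoidHom.comp_apply, FreeGroup.map.of, FreeGroup.lift_apply_of,
        MulEquiv.coe_toMonoidHom, MulAut.conj_apply, twist_add_natCast hT]
  exact DFunLike.congr_fun hcomp w

theorem Gn.nontrivial_of_twist [NeZero n] {w : FreeGroup (ZMod n)} (hT : T ^ n = 1)
    (hX : X ≠ 1) (hw : FreeGroup.lift (twist n T X) w = 1) : Nontrivial (Gn n w) := by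
  have hrel : ∀ u ∈ cycRelators n w, FreeGroup.lift (twist n T X) u = 1 := by
    rintro _ ⟨j, -, rfl⟩
    rw [lift_twist_cycWord hT, hw, mul_one, mul_inv_cancel]
  refine ⟨PresentedGroup.of 0, (1 : PresentedGroup (cycRelators n w)), fun h => hX ?_⟩
  simpa [twist] using congrArg (PresentedGroup.toGroup hrel) h

theorem list_prod_range_conj_pow (Y X : G) (m : ℕ) :
    ((List.range m).map fun i => Y ^ i * X * (Y ^ i)⁻¹).prod = (X * Y) ^ m * (Y ^ m)⁻¹ := by
  induction m with
  | zero => simp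
  | succ m ih => rw [List.prod_range_succ, ih, pow_succ, pow_succ]; group

theorem lift_twist_Pword (hT : T ^ n = 1) (r k s q : ℕ) :
    FreeGroup.lift (twist n T X) (Pword r n k s q) =
      (X * T ^ q) ^ r * ((T ^ q) ^ r)⁻¹ *
        (T ^ (k - 1) * ((X * T ^ q) ^ s * ((T ^ q) ^ s)⁻¹) * (T ^ (k - 1))⁻¹)⁻¹ := by
  have hleft : ⇑(FreeGroup.lift (twist n T X)) ∘ (fun i => FreeGroup.of ((i * q : ℕ) : ZMod n)) =
      fun i => (T ^ q) ^ i * X * ((T ^ q) ^ i)⁻¹ := by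
    ext i
    simp only [Function.comp_apply, FreeGroup.lift_apply_of, twist_natCast hT, pow_mul']
  have hright : ⇑(FreeGroup.lift (twist n T X)) ∘
      (fun i => FreeGroup.of ((k - 1 + i * q : ℕ) : ZMod n)) =
      MulAut.conj (T ^ (k - 1)) ∘ fun i => (T ^ q) ^ i * X * ((T ^ q) ^ i)⁻¹ := by
    ext i
    simp only [Function.comp_apply, FreeGroup.lift_apply_of, twist_natCast hT, MulAut.conj_apply,
      pow_add, pow_mul']
    group
  rw [Pword, map_mul, map_inv, map_list_prod, map_list_prod, List.map_map, List.map_map, hleft,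
    hright, ← List.map_map, ← map_list_prod, list_prod_range_conj_pow, list_prod_range_conj_pow,
    MulAut.conj_apply]

end Twist

theorem Pgroup.nontrivial_of_sub_ne_one {n r k s q : ℕ} [NeZero n] (hrs : s ≤ r)
    (hr : r - s ≠ 1) : Nontrivial (Pgroup r n k s q) := by
  set X := Multiplicative.ofAdd (1 : ZMod (r - s))
  have hX : X ^ (r - s) = 1 := by
    rw [← ofAdd_nsmul, nsmul_one, ZMod.natCast_self, ofAdd_zero]
  refine Gn.nontrivial_of_twist (T := 1) (X := X) (one_pow n) ?_ ?_
  · rwa [Ne, ofAdd_eq_one, ZMod.one_eq_zero_iff]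
  · rw [lift_twist_Pword (one_pow n)]
    simp only [one_pow, mul_one, inv_one, one_mul]
    rw [← pow_eq_pow_of_modEq ((Nat.modEq_iff_dvd' hrs).mpr dvd_rfl) hX, mul_inv_cancel]

theorem Pgroup.nontrivial_succ_of_relation {n k s q : ℕ} [NeZero n] {G : Type*} [Group G]
    {M Z : G} (hd : Nat.Coprime (k - 1) n) (hq : q ≡ 2 * (k - 1) [MOD n]) (hM : M ^ n = 1)
    (hZ : Z ^ (s + 1) = M * Z ^ s * M) (hZM : Z ≠ M ^ 2) :
    Nontrivial (Pgroup (s + 1) n k s q) := by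
  obtain ⟨c, hc⟩ :=
    exists_pow_eq_self_of_coprime (hd.coprime_dvd_right (orderOf_dvd_of_pow_eq_one hM))
  have hT : (M ^ c) ^ n = 1 := by rw [pow_right_comm, hM, one_pow]
  have hTd : (M ^ c) ^ (k - 1) = M := by rw [pow_right_comm, hc]
  have hTq : (M ^ c) ^ q = M ^ 2 := by rw [pow_eq_pow_of_modEq hq hT, pow_mul', hTd]
  refine Gn.nontrivial_of_twist (X := Z * (M ^ 2)⁻¹) hT (mt mul_inv_eq_one.mp hZM) ?_
  rw [lift_twist_Pword hT, hTq, hTd, inv_mul_cancel_right, hZ]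
  group

open DihedralGroup in
theorem DihedralGroup.r_one_pow_succ_eq (s : ℕ) :
    (r 1 : DihedralGroup (2 * s + 1)) ^ (s + 1) = sr 0 * r 1 ^ s * sr 0 := by
  rw [r_one_pow, r_one_pow, sr_mul_r, sr_mul_sr, r.injEq]
  have h0 := ZMod.natCast_self (2 * s + 1)
  push_cast at h0 ⊢
  linear_combination h0

section SL2

open Matrix (det_fin_two det_fin_two_of diagonal diagonal_pow isUnit_iff_isUnit_det)

theorem SemiconjBy.pow_eq_one_of_isUnit {M : Type*} [Monoid M] {a x y : M} (h : SemiconjBy a x y)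
    (ha : IsUnit a) {n : ℕ} (hx : x ^ n = 1) : y ^ n = 1 :=
  ha.mul_right_cancel (by rw [← (h.pow_right n).eq, hx, mul_one, one_mul])

theorem exists_SL2_pow_succ_eq_mul_pow_mul {K : Type*} [Field K] {n s : ℕ} {ζ μ : K}
    (hn : n ≠ 0) (hζn : ζ ^ n = 1) (hζ1 : ζ ^ 2 ≠ 1) (hζ2 : ζ ^ 2 ≠ -1) (hμ : μ ^ (2 * s + 1) = -1)
    (hμ1 : μ ≠ -1) :
    ∃ M Z : SL(2, K), M ^ n = 1 ∧ Z ^ (s + 1) = M * Z ^ s * M ∧ Z ≠ M ^ 2 := by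
  have hζ0 : ζ ≠ 0 := by rintro rfl; simp [hn] at hζn
  have hμ0 : μ ≠ 0 := by rintro rfl; simp at hμ
  have hu : ζ * ζ⁻¹ = 1 := mul_inv_cancel₀ hζ0
  have hν : (μ ^ s) ^ 2 ≠ 1 := fun h => hμ1 (by rwa [pow_succ, pow_mul', h, one_mul] at hμ)
  set ν := μ ^ s
  set a := (ζ + ζ⁻¹) / (1 - ν ^ 2)
  set d := -(a * ν ^ 2)
  -- `a + d = ζ + ζ⁻¹` gives `M` the eigenvalues `ζ^{±1}`, with eigenvectors the columns of
  -- `!![ζ - d, ζ⁻¹ - d; 1, 1]`; and `d = -a ν²` makes `tr (M Z^s) = 0`.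
  have had : a + d = ζ + ζ⁻¹ := by
    have : 1 - ν ^ 2 ≠ 0 := sub_ne_zero.mpr hν.symm
    simp only [a, d]; field_simp; ring
  obtain ⟨M, hM⟩ : ∃ M : SL(2, K), (M : Matrix (Fin 2) (Fin 2) K) = !![a, a * d - 1; 1, d] :=
    ⟨⟨_, by simp [det_fin_two_of]⟩, rfl⟩
  obtain ⟨Z, hZ⟩ : ∃ Z : SL(2, K), (Z : Matrix (Fin 2) (Fin 2) K) = diagonal ![μ, μ⁻¹] :=
    ⟨⟨_, by simp [det_fin_two, hμ0]⟩, rfl⟩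
  have hZpow (m : ℕ) :
      ((Z ^ m : SL(2, K)) : Matrix (Fin 2) (Fin 2) K) = !![μ ^ m, 0; 0, μ⁻¹ ^ m] := by
    rw [Matrix.SpecialLinearGroup.coe_pow, hZ, diagonal_pow]
    ext i j; fin_cases i <;> fin_cases j <;> rfl
  refine ⟨M, Z, ?_, ?_, ?_⟩
  · apply Subtype.ext
    rw [Matrix.SpecialLinearGroup.coe_pow, Matrix.SpecialLinearGroup.coe_one, hM]
    refine SemiconjBy.pow_eq_one_of_isUnit (a := !![ζ - d, ζ⁻¹ - d; 1, 1])
      (x := diagonal ![ζ, ζ⁻¹]) ?_ ?_ ?_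
    · rw [SemiconjBy]
      ext i j; fin_cases i <;> fin_cases j <;> simp
      · linear_combination (-ζ) * had - hu
      · linear_combination (-ζ⁻¹) * had - hu
    · rw [isUnit_iff_isUnit_det, det_fin_two_of, isUnit_iff_ne_zero]
      exact fun h => hζ1 (by linear_combination ζ * h + hu)
    · rw [diagonal_pow]
      ext i j; fin_cases i <;> fin_cases j <;> simp [hζn]
  · have hsq : (M * Z ^ s) ^ 2 = Z ^ (2 * s + 1) := by
      apply Subtype.ext
      rw [Matrix.SpecialLinearGroup.coe_pow, Matrix.SpecialLinearGroup.coe_mul, hZpow, hZpow,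
        hM, sq]
      ext i j; fin_cases i <;> fin_cases j <;> simp [hμ, d] <;> field_simp <;> ring
    refine mul_right_cancel (b := Z ^ s) ?_
    rw [← pow_add, show s + 1 + s = 2 * s + 1 by ring, ← hsq, sq]
    group
  · intro h
    have h10 := congrArg (fun A : SL(2, K) => (A : Matrix (Fin 2) (Fin 2) K) 1 0) h
    simp [hM, hZ, sq, had] at h10
    exact hζ2 (by linear_combination (-ζ) * h10 - hu)

end SL2

theorem Pgroup.nontrivial_succ {n k s q : ℕ} (hn : 2 ≤ n) (hs : 1 ≤ s)
    (hd : Nat.Coprime (k - 1) n) (hq : q ≡ 2 * (k - 1) [MOD n]) :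
    Nontrivial (Pgroup (s + 1) n k s q) := by
  have : NeZero n := ⟨by omega⟩
  rcases Nat.even_or_odd n with hn2 | hn2
  · have : Fact (1 < 2 * s + 1) := ⟨by omega⟩
    refine Pgroup.nontrivial_succ_of_relation hd hq
      (M := DihedralGroup.sr (0 : ZMod (2 * s + 1))) ?_ (DihedralGroup.r_one_pow_succ_eq s) ?_
    · exact orderOf_dvd_iff_pow_eq_one.mp (by rw [DihedralGroup.orderOf_sr]; exact hn2.two_dvd)
    · rw [sq, DihedralGroup.sr_mul_self, Ne, DihedralGroup.one_def, DihedralGroup.r.injEq]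
      exact one_ne_zero
  · obtain ⟨ζ, hζ⟩ : ∃ ζ : ℂ, IsPrimitiveRoot ζ n :=
      ⟨_, Complex.isPrimitiveRoot_exp n (NeZero.ne n)⟩
    obtain ⟨ω, hω⟩ : ∃ ω : ℂ, IsPrimitiveRoot ω (2 * s + 1) :=
      ⟨_, Complex.isPrimitiveRoot_exp (2 * s + 1) (by omega)⟩
    have hζ1 : ζ ^ 2 ≠ 1 := fun h => by
      have := Nat.le_of_dvd two_pos ((hζ.pow_eq_one_iff_dvd 2).mp h)
      obtain ⟨m, rfl⟩ := hn2
      omega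
    have hζ2 : ζ ^ 2 ≠ -1 := fun h => by
      have := congrArg (· ^ n) h
      rw [pow_right_comm, hζ.pow_eq_one, one_pow, hn2.neg_one_pow] at this
      norm_num at this
    obtain ⟨M, Z, hM, hZ, hZM⟩ := exists_SL2_pow_succ_eq_mul_pow_mul (NeZero.ne n)
      hζ.pow_eq_one hζ1 hζ2 (μ := -ω) (by rw [(odd_two_mul_add_one s).neg_pow, hω.pow_eq_one])
      (by rw [Ne, neg_inj]; exact hω.ne_one (by omega))
    exact Pgroup.nontrivial_succ_of_relation hd hq hM hZ hZM

theorem Nat.coprime_of_gcd_gcd_eq_one_of_modEq {n d q : ℕ} (hgcd : Nat.gcd n (Nat.gcd d q) = 1)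
    (hq : q ≡ 2 * d [MOD n]) : Nat.Coprime d n := by
  have hdvd : Nat.gcd d n ∣ Nat.gcd n (Nat.gcd d q) :=
    Nat.dvd_gcd (Nat.gcd_dvd_right d n) <| Nat.dvd_gcd (Nat.gcd_dvd_left d n) <|
      (hq.dvd_iff (Nat.gcd_dvd_right d n)).mpr (dvd_mul_of_dvd_right (Nat.gcd_dvd_left d n) 2)
  rwa [hgcd, Nat.dvd_one] at hdvd

theorem Int.dvd_sub_one_and_dvd_of_modEq {n : ℕ} {k q : ℤ} (hq : q ≡ 2 * (k - 1) [ZMOD n])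
    (hk : k ≡ 1 [ZMOD n] ∨ k ≡ 1 + q [ZMOD n]) : (n : ℤ) ∣ k - 1 ∧ (n : ℤ) ∣ q := by
  simp only [← ZMod.intCast_eq_intCast_iff, ← ZMod.intCast_zmod_eq_zero_iff_dvd] at *
  push_cast at *
  rcases hk with hk | hk
  · exact ⟨by linear_combination hk, by linear_combination hq + 2 * hk⟩
  · exact ⟨by linear_combination -hk - hq, by linear_combination -2 * hk - hq⟩

theorem stmt_11_general (n k q r s : ℕ) (hn : 2 ≤ n) (hk : 1 ≤ k) (hs : 1 ≤ s)
    (hrs : s ≤ r) (hgcd : Nat.gcd n (Nat.gcd (k - 1) q) = 1)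
    (htype : (q * (r - s) : ℤ) ≡ 2 * (k - 1) [ZMOD (n : ℤ)]) :
    Subsingleton (Pgroup r n k s q) ↔
      (|(r : ℤ) - s| = 1 ∧
        ((k : ℤ) ≡ 1 [ZMOD (n : ℤ)] ∨ (k : ℤ) ≡ 1 + q * (r - s) [ZMOD (n : ℤ)])) := by
  refine iff_of_false (not_subsingleton_iff_nontrivial.mpr ?_) ?_
  · have : NeZero n := ⟨by omega⟩
    by_cases hr : r - s = 1
    · obtain rfl : r = s + 1 := by omega
      have hq2 : q ≡ 2 * (k - 1) [MOD n] := by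
        rw [← Int.natCast_modEq_iff]
        push_cast [hk] at htype ⊢
        simpa using htype
      exact Pgroup.nontrivial_succ hn hs (Nat.coprime_of_gcd_gcd_eq_one_of_modEq hgcd hq2) hq2
    · exact Pgroup.nontrivial_of_sub_ne_one hrs hr
  · rintro ⟨hr, hk1⟩
    rw [abs_of_nonneg (by omega)] at hr
    rw [hr, mul_one] at htype hk1
    obtain ⟨hnk, hnq⟩ := Int.dvd_sub_one_and_dvd_of_modEq htype hk1
    have hdvd : n ∣ Nat.gcd n (Nat.gcd (k - 1) q) :=
      Nat.dvd_gcd dvd_rfl (Nat.dvd_gcd (Int.natCast_dvd_natCast.mp (by push_cast [hk]; exact hnk))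
        (Int.natCast_dvd_natCast.mp hnq))
    rw [hgcd, Nat.dvd_one] at hdvd
    omega

/-- (Corollary D of [MR4315549].) For `n ≥ 2`, `k, q ≥ 1`, `r ≥ s ≥ 1` with
`gcd(n, k-1, q) = 1`, if `P(r,n,k,s,q)` is of type `Z` (i.e. `q(r-s) ≡ 2(k-1) mod n`), then
`P(r,n,k,s,q)` is trivial iff `|r-s| = 1` and either `k ≡ 1` or `k ≡ 1 + q(r-s)` mod `n`. -/
theorem stmt_11 (n k q r s : ℕ) (hn : 2 ≤ n) (hk : 1 ≤ k) (hq : 1 ≤ q) (hs : 1 ≤ s)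
    (hrs : s ≤ r) (hgcd : Nat.gcd n (Nat.gcd (k - 1) q) = 1)
    (htype : (q * (r - s) : ℤ) ≡ 2 * (k - 1) [ZMOD (n : ℤ)]) :
    Subsingleton (Pgroup r n k s q) ↔
      (|(r : ℤ) - s| = 1 ∧
        ((k : ℤ) ≡ 1 [ZMOD (n : ℤ)] ∨ (k : ℤ) ≡ 1 + q * (r - s) [ZMOD (n : ℤ)])) :=
  stmt_11_general n k q r s hn hk hs hrs hgcd htype
end

section
/- The Prishchepov group P(4,3,3,3,1), i.e. the group presented on generators x_0, x_1, x_2 with the three relators obtained from w = x_0 x_1 x_2 x_0 (x_2 x_0 x_1)^{−1} by cyclically shifting all indices modulo 3, is a nontrivial group. -/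
section Stmt12Aux

/-- Image of `x₀`: a permutation of `Fin 8` coming from the action of
`PSL(2,7)` on the projective line. -/
def perm0 : Equiv.Perm (Fin 8) :=
  ⟨![5,4,1,7,6,3,2,0], ![7,2,6,5,1,0,4,3], by decide, by decide⟩

/-- Image of `x₁`. -/
def perm1 : Equiv.Perm (Fin 8) :=
  ⟨![6,4,3,1,2,7,5,0], ![7,3,4,2,1,6,0,5], by decide, by decide⟩

/-- Image of `x₂`. -/
def perm2 : Equiv.Perm (Fin 8) :=
  ⟨![3,5,1,6,2,4,7,0], ![7,2,4,0,5,1,3,6], by decide, by decide⟩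

/-- Assignment of generators. -/
def stmt12f : ZMod 3 → Equiv.Perm (Fin 8) :=
  fun i => if i = 0 then perm0 else if i = 1 then perm1 else perm2

lemma stmt12_rels : ∀ r ∈ cycRelators 3 (Pword 4 3 3 3 1),
    FreeGroup.lift stmt12f r = 1 := by
  rintro r ⟨j, hj, rfl⟩
  interval_cases j <;>
  · simp only [cycWord, Pword, List.range_succ, List.range_zero, List.map_append,
      List.map_cons, List.map_nil, List.prod_append, List.prod_cons, List.prod_nil,
      map_mul, map_inv, FreeGroup.map.of, FreeGroup.lift_apply_of, mul_one, one_mul]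
    decide

/-- The induced homomorphism on the presented group. -/
def stmt12φ : PresentedGroup (cycRelators 3 (Pword 4 3 3 3 1)) →* Equiv.Perm (Fin 8) :=
  PresentedGroup.toGroup stmt12_rels

end Stmt12Aux

/-- The Prishchepov group `P(4,3,3,3,1)` is nontrivial. -/
theorem stmt_12 : Nontrivial (Pgroup 4 3 3 3 1) := by
  refine ⟨(PresentedGroup.of (0 : ZMod 3) :
      PresentedGroup (cycRelators 3 (Pword 4 3 3 3 1))), 1, fun h => ?_⟩
  have h2 : stmt12φ (PresentedGroup.of (0 : ZMod 3)) = stmt12φ 1 := congrArg stmt12φ h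
  rw [map_one] at h2
  have h3 : stmt12φ (PresentedGroup.of (0 : ZMod 3)) = stmt12f 0 :=
    PresentedGroup.toGroup.of stmt12_rels
  rw [h3] at h2
  exact absurd h2 (by decide)
end

section
/- Let n ≥ 1, r ≥ 1, and k ≥ 2 be integers and let ζ = e^{2πi/n} be a primitive nth root of unity. Let F(t) = ∑_{i=0}^{r−1} t^i − t^{k−1} ∑_{i=0}^{r−2} t^i and G(t) = ∑_{i=0}^{k−2} t^i − t^{r} ∑_{i=0}^{k−3} t^i, where empty sums are 0. Then ∏_{i=0}^{n−1} F(ζ^i) = ∏_{i=0}^{n−1} G(ζ^i). -/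
/-- For `n, r ≥ 1`, `k ≥ 2`, with `ζ = e^{2πi/n}`,
`F(t) = ∑_{i<r} t^i - t^{k-1} ∑_{i<r-1} t^i` and `G(t) = ∑_{i<k-1} t^i - t^r ∑_{i<k-2} t^i`
(empty sums being `0`), one has `∏_{i<n} F(ζ^i) = ∏_{i<n} G(ζ^i)`. -/
theorem stmt_14 (n r k : ℕ) (hn : 1 ≤ n) (hr : 1 ≤ r) (hk : 2 ≤ k)
    (F G : ℂ → ℂ)
    (hF : ∀ t : ℂ, F t =
      (∑ i ∈ Finset.range r, t ^ i) - t ^ (k - 1) * ∑ i ∈ Finset.range (r - 1), t ^ i)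
    (hG : ∀ t : ℂ, G t =
      (∑ i ∈ Finset.range (k - 1), t ^ i) - t ^ r * ∑ i ∈ Finset.range (k - 2), t ^ i) :
    ∏ i ∈ Finset.range n, F ((Complex.exp (2 * Real.pi * Complex.I / n)) ^ i) =
      ∏ i ∈ Finset.range n, G ((Complex.exp (2 * Real.pi * Complex.I / n)) ^ i) := by
  have key : ∀ t : ℂ, F t = G t := by
    intro t
    rw [hF, hG]
    by_cases h : t = 1
    · subst h
      simp only [one_pow, Finset.sum_const, Finset.card_range, nsmul_eq_mul, mul_one, one_mul]
      rw [Nat.cast_sub hr, Nat.cast_sub (show 1 ≤ k by omega), Nat.cast_sub hk]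
      push_cast
      ring
    · have hne : t - 1 ≠ 0 := sub_ne_zero.mpr h
      apply mul_right_cancel₀ hne
      rw [sub_mul, sub_mul, mul_assoc, mul_assoc,
        geom_sum_mul, geom_sum_mul, geom_sum_mul, geom_sum_mul]
      have e : t ^ (k - 1) * t ^ (r - 1) = t ^ r * t ^ (k - 2) := by
        rw [← pow_add, ← pow_add, show k - 1 + (r - 1) = r + (k - 2) by omega]
      linear_combination -e
  simp only [key]
end

section
/- Let n, k, q, r, s ≥ 1 be integers, set d = gcd(n,q), N = n/d, Q = q/d, and suppose k ≡ 1 (mod d); write k − 1 = d(K′ − 1). Let Q̂ be any integer with Q·Q̂ ≡ 1 (mod N) and set K = Q̂(K′ − 1) + 1. Then the Prishchepov group P(r,n,k,s,q) is isomorphic to the free product of d copies of the Prishchepov group P(r,N,K,s,1). -/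
section Generic
variable {α β : Type*}

theorem mk_eq_one_of_mem (rels : Set (FreeGroup α)) {r : FreeGroup α} (h : r ∈ rels) :
    PresentedGroup.mk rels r = 1 := by
  rw [← (PresentedGroup.mk rels).map_one]
  exact (QuotientGroup.eq_one_iff r).2 (Subgroup.subset_normalClosure h)

/-- transport a presented group across an equality of relator sets -/
def mulEquivOfRelsEq {r₁ r₂ : Set (FreeGroup α)} (h : r₁ = r₂) :
    PresentedGroup r₁ ≃* PresentedGroup r₂ := h ▸ MulEquiv.refl _

variable {ι : Type*} {A : ι → Type*}

/-- relators obtained by pushing per-component relators into the sigma type -/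
def sigmaRels (rels : ∀ i, Set (FreeGroup (A i))) : Set (FreeGroup (Σ i, A i)) :=
  ⋃ i, FreeGroup.map (Sigma.mk i) '' rels i

/-- A presentation whose relators involve only one component at a time presents
the free product of the component presentations. -/
noncomputable def splitIso (rels : ∀ i, Set (FreeGroup (A i))) :
    PresentedGroup (sigmaRels rels) ≃* Monoid.CoprodI (fun i => PresentedGroup (rels i)) := by
  have hF : ∀ r ∈ sigmaRels rels,
      FreeGroup.lift (fun p : Σ i, A i => Monoid.CoprodI.of (M := fun i => PresentedGroup (rels i))
        (PresentedGroup.of p.2)) r = 1 := by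
    rintro r hr
    simp only [sigmaRels, Set.mem_iUnion, Set.mem_image] at hr
    obtain ⟨i, r₀, hr₀, rfl⟩ := hr
    have : (FreeGroup.lift (fun p : Σ i, A i => Monoid.CoprodI.of
        (M := fun i => PresentedGroup (rels i)) (PresentedGroup.of p.2))).comp
        (FreeGroup.map (Sigma.mk i)) =
        (Monoid.CoprodI.of (M := fun i => PresentedGroup (rels i))).comp
          (PresentedGroup.mk (rels i)) := by
      apply FreeGroup.ext_hom; intro a; simp [PresentedGroup.of]
    have := DFunLike.congr_fun this r₀
    simp only [MonoidHom.comp_apply] at this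
    rw [this, mk_eq_one_of_mem _ hr₀, map_one]
  have hB : ∀ i, ∀ r ∈ rels i,
      FreeGroup.lift (fun a : A i => PresentedGroup.of (rels := sigmaRels rels) ⟨i, a⟩) r = 1 := by
    intro i r hr
    have : (FreeGroup.lift (fun a : A i => PresentedGroup.of (rels := sigmaRels rels) ⟨i, a⟩)) =
        (PresentedGroup.mk (sigmaRels rels)).comp (FreeGroup.map (Sigma.mk i)) := by
      apply FreeGroup.ext_hom; intro a; simp [PresentedGroup.of]
    rw [this, MonoidHom.comp_apply]
    exact mk_eq_one_of_mem _ (Set.mem_iUnion.2 ⟨i, Set.mem_image_of_mem _ hr⟩)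
  refine MonoidHom.toMulEquiv (PresentedGroup.toGroup hF)
    (Monoid.CoprodI.lift fun i => PresentedGroup.toGroup (hB i)) ?_ ?_
  · ext p
    rcases p with ⟨i, a⟩
    simp [PresentedGroup.toGroup.of, Monoid.CoprodI.lift_of]
  · apply Monoid.CoprodI.ext_hom
    intro i
    ext a
    simp [Monoid.CoprodI.lift_of, PresentedGroup.toGroup.of]

/-- congruence of free products -/
def coprodICongr {M N : ι → Type*} [∀ i, Group (M i)] [∀ i, Group (N i)]
    (e : ∀ i, M i ≃* N i) : Monoid.CoprodI M ≃* Monoid.CoprodI N := by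
  refine MonoidHom.toMulEquiv
    (Monoid.CoprodI.lift fun i => Monoid.CoprodI.of.comp (e i).toMonoidHom)
    (Monoid.CoprodI.lift fun i => Monoid.CoprodI.of.comp (e i).symm.toMonoidHom) ?_ ?_ <;>
  · apply Monoid.CoprodI.ext_hom
    intro i
    ext a
    simp [Monoid.CoprodI.lift_of]

end Generic


/-- abstract two-part positive/negative word -/
def PW {β : Type*} (r s : ℕ) (f g : ℕ → β) : FreeGroup β :=
  ((List.range r).map (fun i => FreeGroup.of (f i))).prod *
  (((List.range s).map (fun i => FreeGroup.of (g i))).prod)⁻¹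

theorem map_PW {β γ : Type*} (φ : β → γ) (r s : ℕ) (f g : ℕ → β) :
    FreeGroup.map φ (PW r s f g) = PW r s (φ ∘ f) (φ ∘ g) := by
  unfold PW
  rw [map_mul, map_inv, map_list_prod, map_list_prod, List.map_map, List.map_map]
  simp [Function.comp_def]

theorem PW_congr {β : Type*} (r s : ℕ) {f g f' g' : ℕ → β}
    (hf : ∀ i < r, f i = f' i) (hg : ∀ i < s, g i = g' i) : PW r s f g = PW r s f' g' := by
  unfold PW
  have h1 : List.map (fun i => FreeGroup.of (f i)) (List.range r) =
      List.map (fun i => FreeGroup.of (f' i)) (List.range r) := by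
    apply List.map_congr_left; intro i hi; rw [hf i (List.mem_range.1 hi)]
  have h2 : List.map (fun i => FreeGroup.of (g i)) (List.range s) =
      List.map (fun i => FreeGroup.of (g' i)) (List.range s) := by
    apply List.map_congr_left; intro i hi; rw [hg i (List.mem_range.1 hi)]
  rw [h1, h2]

theorem Pword_eq (r n k s q : ℕ) :
    Pword r n k s q = PW r s (fun i => ((i * q : ℕ) : ZMod n))
      (fun i => (((k - 1) + i * q : ℕ) : ZMod n)) := rfl

theorem cycWord_Pword (n j r k s q : ℕ) :
    cycWord n j (Pword r n k s q) =
      PW r s (fun i => ((j + i * q : ℕ) : ZMod n))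
        (fun i => ((j + (k - 1) + i * q : ℕ) : ZMod n)) := by
  rw [Pword_eq, cycWord, map_PW]
  apply PW_congr <;> intro i _ <;> simp [Function.comp] <;> push_cast <;> ring_nf

/-- With `d = gcd(n,q)`, `N = n/d`, `Q = q/d`, `k ≡ 1 (mod d)`,
`k - 1 = d(K' - 1)`, `Q·Q̂ ≡ 1 (mod N)` and `K = Q̂(K'-1) + 1`, the group `P(r,n,k,s,q)` is
isomorphic to the free product of `d` copies of `P(r,N,K,s,1)`. -/
theorem stmt_16 (n k q r s : ℕ) (hn : 1 ≤ n) (hk : 1 ≤ k) (hq : 1 ≤ q) (hr : 1 ≤ r)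
    (hs : 1 ≤ s) (d N Q K' Qhat K : ℕ)
    (hd : d = Nat.gcd n q) (hN : N = n / d) (hQ : Q = q / d)
    (hkd : k ≡ 1 [MOD d])
    (hK'1 : 1 ≤ K') (hK' : k - 1 = d * (K' - 1))
    (hQhat : Q * Qhat ≡ 1 [MOD N])
    (hK : K = Qhat * (K' - 1) + 1) :
    Nonempty (Pgroup r n k s q ≃* Monoid.CoprodI (fun _ : Fin d => Pgroup r N K s 1)) := by
  have hdn : d ∣ n := hd ▸ Nat.gcd_dvd_left n q
  have hdq : d ∣ q := hd ▸ Nat.gcd_dvd_right n q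
  have hd0 : 0 < d := by
    rcases Nat.eq_zero_or_pos d with h | h
    · exfalso; rw [h] at hdn; simp at hdn; omega
    · exact h
  have hn_eq : n = d * N := by rw [hN, Nat.mul_div_cancel' hdn]
  have hq_eq : q = d * Q := by rw [hQ, Nat.mul_div_cancel' hdq]
  have hN0 : 0 < N := by
    rcases Nat.eq_zero_or_pos N with h | h
    · exfalso; rw [h, Nat.mul_zero] at hn_eq; omega
    · exact h
  haveI : NeZero n := ⟨by omega⟩
  haveI : NeZero N := ⟨by omega⟩
  -- the re-indexing equivalence
  set Emap : (Σ _ : Fin d, ZMod N) → ZMod n :=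
    fun p => ((p.1.val + d * p.2.val : ℕ) : ZMod n) with hEmap
  have hbound : ∀ p : Σ _ : Fin d, ZMod N, p.1.val + d * p.2.val < n := by
    rintro ⟨c, m⟩
    have h1 : c.val < d := c.isLt
    have h2 : m.val < N := ZMod.val_lt m
    show c.val + d * m.val < n
    have h3 : c.val + d * m.val < d * (m.val + 1) := by nlinarith
    have h4 : d * (m.val + 1) ≤ d * N := Nat.mul_le_mul_left d (by omega)
    omega
  have hinj : Function.Injective Emap := by
    rintro ⟨c, m⟩ ⟨c', m'⟩ h
    simp only [hEmap] at h
    have hv := congrArg ZMod.val h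
    rw [ZMod.val_natCast_of_lt (hbound ⟨c, m⟩), ZMod.val_natCast_of_lt (hbound ⟨c', m'⟩)] at hv
    have hc : c.val = c'.val := by
      have e1 : (c.val + d * m.val) % d = c.val := by
        rw [Nat.add_mul_mod_self_left, Nat.mod_eq_of_lt c.isLt]
      have e2 : (c'.val + d * m'.val) % d = c'.val := by
        rw [Nat.add_mul_mod_self_left, Nat.mod_eq_of_lt c'.isLt]
      rw [← e1, ← e2, hv]
    have hm : m.val = m'.val := by
      have e1 : (c.val + d * m.val) / d = m.val := by
        rw [Nat.add_mul_div_left _ _ hd0, Nat.div_eq_of_lt c.isLt, Nat.zero_add]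
      have e2 : (c'.val + d * m'.val) / d = m'.val := by
        rw [Nat.add_mul_div_left _ _ hd0, Nat.div_eq_of_lt c'.isLt, Nat.zero_add]
      rw [← e1, ← e2, hv]
    obtain rfl : c = c' := Fin.ext hc
    obtain rfl : m = m' := ZMod.val_injective N hm
    rfl
  have hcard : Fintype.card (Σ _ : Fin d, ZMod N) = Fintype.card (ZMod n) := by
    simp [ZMod.card, hn_eq]
  set E : (Σ _ : Fin d, ZMod N) ≃ ZMod n :=
    Equiv.ofBijective Emap ((Fintype.bijective_iff_injective_and_card Emap).2 ⟨hinj, hcard⟩)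
    with hE
  have hEapp : ∀ p, E p = ((p.1.val + d * p.2.val : ℕ) : ZMod n) := fun p => rfl
  have hEsymm : ∀ a : ℕ, E.symm ((a : ℕ) : ZMod n) =
      ⟨⟨a % d, Nat.mod_lt a hd0⟩, ((a / d : ℕ) : ZMod N)⟩ := by
    intro a
    rw [Equiv.symm_apply_eq, hEapp]
    simp only [ZMod.val_natCast]
    rw [ZMod.natCast_eq_natCast_iff]
    have h1 : a / d % N ≡ a / d [MOD N] := Nat.mod_modEq _ _
    have h2 : d * (a / d % N) ≡ d * (a / d) [MOD d * N] := h1.mul_left' d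
    calc a = a % d + d * (a / d) := (Nat.mod_add_div a d).symm
    _ ≡ a % d + d * (a / d % N) [MOD n] := by rw [hn_eq]; exact (h2.add_left _).symm
  set W : FreeGroup (ZMod n) := Pword r n k s q with hW
  set W' : FreeGroup (ZMod N) := Pword r N K' s Q with hW'
  -- the key computation: relators split along residue classes mod d
  have key1 : ∀ j : ℕ, (FreeGroup.freeGroupCongr E.symm) (cycWord n j W) =
      FreeGroup.map (Sigma.mk (⟨j % d, Nat.mod_lt j hd0⟩ : Fin d))
        (cycWord N (j / d) W') := by
    intro j
    have hcong : ∀ w, (FreeGroup.freeGroupCongr E.symm) w = FreeGroup.map E.symm w :=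
      fun _ => rfl
    rw [hW, hW', cycWord_Pword, cycWord_Pword, hcong, map_PW, map_PW]
    apply PW_congr
    · intro i _
      simp only [Function.comp_apply]
      rw [hEsymm]
      have h1 : (j + i * q) % d = j % d := by
        have : j + i * q = j + (i * Q) * d := by rw [hq_eq]; ring
        rw [this, Nat.add_mul_mod_self_right]
      have h2 : (j + i * q) / d = j / d + i * Q := by
        have : j + i * q = j + (i * Q) * d := by rw [hq_eq]; ring
        rw [this, Nat.add_mul_div_right _ _ hd0]
      simp only [h1, h2]
    · intro i _
      simp only [Function.comp_apply]
      rw [hEsymm]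
      have hx : j + (k - 1) + i * q = j + ((K' - 1) + i * Q) * d := by
        rw [hK', hq_eq]; ring
      have h1 : (j + (k - 1) + i * q) % d = j % d := by
        rw [hx, Nat.add_mul_mod_self_right]
      have h2 : (j + (k - 1) + i * q) / d = j / d + (K' - 1) + i * Q := by
        rw [hx, Nat.add_mul_div_right _ _ hd0]; ring
      simp only [h1, h2]
  have hset1 : (FreeGroup.freeGroupCongr E.symm) '' cycRelators n W =
      sigmaRels (fun _ : Fin d => cycRelators N W') := by
    ext u
    constructor
    · rintro ⟨_, ⟨j, hj, rfl⟩, rfl⟩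
      rw [key1 j]
      refine Set.mem_iUnion.2 ⟨⟨j % d, Nat.mod_lt j hd0⟩, Set.mem_image_of_mem _ ?_⟩
      exact ⟨j / d, (Nat.div_lt_iff_lt_mul hd0).2 (by rw [hn_eq, Nat.mul_comm d N] at hj; exact hj), rfl⟩
    · intro hu
      rw [sigmaRels, Set.mem_iUnion] at hu
      obtain ⟨c, r₀, ⟨t, ht, rfl⟩, rfl⟩ := hu
      set j : ℕ := c.val + d * t with hj
      have hjn : j < n := by
        have h1 : c.val < d := c.isLt
        have h2 : j < d * (t + 1) := by rw [hj]; nlinarith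
        have h3 : d * (t + 1) ≤ d * N := Nat.mul_le_mul_left d (by omega)
        omega
      have hjd : j % d = c.val := by
        rw [hj, Nat.add_mul_mod_self_left, Nat.mod_eq_of_lt c.isLt]
      have hjq : j / d = t := by
        rw [hj, Nat.add_mul_div_left _ _ hd0, Nat.div_eq_of_lt c.isLt, Nat.zero_add]
      refine ⟨cycWord n j W, ⟨j, hjn, rfl⟩, ?_⟩
      rw [key1 j, hjq]
      have hfin : (⟨j % d, Nat.mod_lt j hd0⟩ : Fin d) = c := Fin.ext hjd
      rw [hfin]
  -- the per-factor rescaling by Qhat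
  have hu : (Q : ZMod N) * (Qhat : ZMod N) = 1 := by
    have := (ZMod.natCast_eq_natCast_iff _ _ _).2 hQhat
    push_cast at this
    simpa using this
  have hu' : (Qhat : ZMod N) * (Q : ZMod N) = 1 := by rw [mul_comm]; exact hu
  set e2 : ZMod N ≃ ZMod N :=
    { toFun := fun x => (Qhat : ZMod N) * x
      invFun := fun x => (Q : ZMod N) * x
      left_inv := fun x => by
        show (Q : ZMod N) * ((Qhat : ZMod N) * x) = x
        rw [← mul_assoc, hu, one_mul]
      right_inv := fun x => by
        show (Qhat : ZMod N) * ((Q : ZMod N) * x) = x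
        rw [← mul_assoc, hu', one_mul] } with he2
  have hK1 : K - 1 = Qhat * (K' - 1) := by omega
  have key2 : ∀ t : ℕ, (FreeGroup.freeGroupCongr e2) (cycWord N t W') =
      cycWord N ((Qhat * t) % N) (Pword r N K s 1) := by
    intro t
    have hcong : ∀ w, (FreeGroup.freeGroupCongr e2) w = FreeGroup.map e2 w := fun _ => rfl
    rw [hW', cycWord_Pword, cycWord_Pword, hcong, map_PW]
    apply PW_congr
    · intro i _
      show (Qhat : ZMod N) * ((t + i * Q : ℕ) : ZMod N) = ((Qhat * t % N + i * 1 : ℕ) : ZMod N)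
      push_cast [ZMod.natCast_mod]
      linear_combination (i : ZMod N) * hu'
    · intro i _
      show (Qhat : ZMod N) * ((t + (K' - 1) + i * Q : ℕ) : ZMod N) =
        ((Qhat * t % N + (K - 1) + i * 1 : ℕ) : ZMod N)
      rw [hK1]
      push_cast [ZMod.natCast_mod]
      linear_combination (i : ZMod N) * hu'
  have cycWord_congr : ∀ (a b : ℕ) (w : FreeGroup (ZMod N)),
      a ≡ b [MOD N] → cycWord N a w = cycWord N b w := by
    intro a b w hab
    unfold cycWord
    rw [(ZMod.natCast_eq_natCast_iff _ _ _).2 hab]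
  have hset2 : (FreeGroup.freeGroupCongr e2) '' cycRelators N W' =
      cycRelators N (Pword r N K s 1) := by
    ext u
    constructor
    · rintro ⟨_, ⟨t, ht, rfl⟩, rfl⟩
      exact ⟨(Qhat * t) % N, Nat.mod_lt _ hN0, key2 t⟩
    · rintro ⟨t', ht', rfl⟩
      refine ⟨cycWord N ((Q * t') % N) W', ⟨(Q * t') % N, Nat.mod_lt _ hN0, rfl⟩, ?_⟩
      rw [key2]
      have step : Qhat * (Q * t' % N) ≡ t' [MOD N] := by
        calc Qhat * (Q * t' % N) ≡ Qhat * (Q * t') [MOD N] :=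
              (Nat.mod_modEq (Q * t') N).mul_left Qhat
        _ = Q * Qhat * t' := by ring
        _ ≡ 1 * t' [MOD N] := hQhat.mul_right t'
        _ = t' := one_mul t'
      exact cycWord_congr _ _ _ ((Nat.mod_modEq _ N).trans step)
  -- assemble the isomorphism
  have i1 : PresentedGroup (cycRelators n W) ≃*
      PresentedGroup ((FreeGroup.freeGroupCongr E.symm) '' cycRelators n W) :=
    PresentedGroup.equivPresentedGroup (cycRelators n W) E.symm
  have i2 := mulEquivOfRelsEq hset1
  have i3 := splitIso (fun _ : Fin d => cycRelators N W')
  have i4 : PresentedGroup (cycRelators N W') ≃*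
      PresentedGroup (cycRelators N (Pword r N K s 1)) :=
    (PresentedGroup.equivPresentedGroup (cycRelators N W') e2).trans (mulEquivOfRelsEq hset2)
  exact ⟨((i1.trans i2).trans i3).trans (coprodICongr (fun _ => i4))⟩
end

section
/- Let n ≥ 1 be an integer, let f be a polynomial with integer coefficients, and let ζ = e^{2πi/n}. Then ∏_{i=0}^{n−1} f(ζ^i) = ∏_{d ∣ n} N_{ℚ(ζ_d)/ℚ}(f(ζ_d)), where for each positive divisor d of n, ζ_d = e^{2πi/d} is a primitive dth root of unity and N_{ℚ(ζ_d)/ℚ} denotes the field norm from the cyclotomic field ℚ(ζ_d) to ℚ. -/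
/-!
The powers `ζ ^ i`, `i < n`, are exactly the `n`-th roots of unity, which split according to their
order `d ∣ n` into the primitive `d`-th roots of unity. These are the roots of the cyclotomic
polynomial `Φ_d`, the minimal polynomial of `ζ_d` over `ℚ`, so they are the images of `ζ_d` under
the embeddings `ℚ(ζ_d) → ℂ`, and the norm of `f(ζ_d)` is the product of `f` over them.
-/

open Polynomial IntermediateField

theorem Algebra.norm_aeval_adjoinSimple_gen {K L E : Type*} [Field K] [Field L] [Field E]
    [Algebra K L] [Algebra K E] [IsAlgClosed E] [DecidableEq E] {x : L} (hx : IsSeparable K x)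
    (f : K[X]) :
    algebraMap K E (Algebra.norm K (aeval (AdjoinSimple.gen K x) f)) =
      ∏ z ∈ ((minpoly K x).aroots E).toFinset, aeval z f := by
  have hint : IsIntegral K x := hx.isIntegral
  have := adjoin.finiteDimensional hint
  have := (isSeparable_adjoin_simple_iff_isSeparable K L).2 hx
  rw [Algebra.norm_eq_prod_embeddings,
    Finset.prod_subtype _ (fun _ ↦ Multiset.mem_toFinset) fun z ↦ aeval z f]
  refine Fintype.prod_equiv (algHomAdjoinIntegralEquiv K hint) _ _ fun σ ↦ ?_
  conv_lhs => rw [← (algHomAdjoinIntegralEquiv K hint).symm_apply_apply σ]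
  rw [← aeval_algHom_apply, algHomAdjoinIntegralEquiv_symm_apply_gen]

theorem IsPrimitiveRoot.aroots_minpoly_rat {L E : Type*} [Field L] [CharZero L] [Field E]
    [CharZero E] {μ : L} {d : ℕ} (hμ : IsPrimitiveRoot μ d) (hd : 0 < d) :
    (minpoly ℚ μ).aroots E = (primitiveRoots d E).val := by
  have : NeZero (d : E) := ⟨Nat.cast_ne_zero.2 hd.ne'⟩
  rw [← cyclotomic_eq_minpoly_rat hμ hd, aroots_def, map_cyclotomic,
    cyclotomic.roots_eq_primitiveRoots_val]

theorem IsPrimitiveRoot.norm_aeval_adjoinSimple_gen {L E : Type*} [Field L] [CharZero L] [Field E]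
    [CharZero E] [IsAlgClosed E] {μ : L} {d : ℕ} (hμ : IsPrimitiveRoot μ d) (hd : 0 < d)
    (f : ℤ[X]) :
    algebraMap ℚ E (Algebra.norm ℚ (aeval (AdjoinSimple.gen ℚ μ) f)) =
      ∏ z ∈ primitiveRoots d E, aeval z f := by
  classical
  have hsep : IsSeparable ℚ μ := (minpoly.irreducible ((hμ.isIntegral hd).tower_top)).separable
  have h := Algebra.norm_aeval_adjoinSimple_gen (E := E) hsep (f.map (algebraMap ℤ ℚ))
  rwa [aeval_map_algebraMap, hμ.aroots_minpoly_rat hd, Finset.val_toFinset,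
    Finset.prod_congr rfl fun z _ ↦ aeval_map_algebraMap ℚ z f] at h

theorem IsPrimitiveRoot.prod_range_pow_eq_prod_primitiveRoots {R M : Type*} [CommRing R]
    [IsDomain R] [CommMonoid M] {ζ : R} {n : ℕ} (hζ : IsPrimitiveRoot ζ n) (g : R → M) :
    ∏ i ∈ Finset.range n, g (ζ ^ i) = ∏ d ∈ n.divisors, ∏ z ∈ primitiveRoots d R, g z := by
  classical
  have hval : (nthRootsFinset n (1 : R)).val = (Multiset.range n).map (ζ ^ ·) := by
    rw [nthRootsFinset_def, Multiset.toFinset_val, hζ.nthRoots_one_nodup.dedup,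
      hζ.nthRoots_eq (one_pow n)]
    simp only [mul_one]
  rw [← Finset.prod_biUnion fun _ _ _ _ h ↦ IsPrimitiveRoot.disjoint h,
    ← nthRoots_one_eq_biUnion_primitiveRoots, Finset.prod_eq_multiset_prod,
    Finset.prod_eq_multiset_prod (nthRootsFinset n 1), hval, Multiset.map_map]
  rfl

theorem stmt_18_general (n : ℕ) (f : Polynomial ℤ) :
    ∏ i ∈ Finset.range n,
        Polynomial.aeval ((Complex.exp (2 * Real.pi * Complex.I / n)) ^ i) f =
      ((∏ d ∈ n.divisors,
          Algebra.norm ℚ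
            (Polynomial.aeval
              (IntermediateField.AdjoinSimple.gen ℚ
                (Complex.exp (2 * Real.pi * Complex.I / d))) f) : ℚ) : ℂ) := by
  obtain rfl | hn := eq_or_ne n 0
  · simp
  rw [(Complex.isPrimitiveRoot_exp n hn).prod_range_pow_eq_prod_primitiveRoots
    fun z ↦ Polynomial.aeval z f, Rat.cast_prod]
  refine Finset.prod_congr rfl fun d hd ↦ ?_
  have hd : 0 < d := Nat.pos_of_mem_divisors hd
  exact ((Complex.isPrimitiveRoot_exp d hd.ne').norm_aeval_adjoinSimple_gen hd f).symm

/-- For a polynomial `f` with integer coefficients and `ζ = e^{2πi/n}`,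
`∏_{i<n} f(ζ^i) = ∏_{d ∣ n} N_{ℚ(ζ_d)/ℚ}(f(ζ_d))`, where `ζ_d = e^{2πi/d}` and
`N_{ℚ(ζ_d)/ℚ}` is the field norm of the cyclotomic field `ℚ(ζ_d) ⊆ ℂ` over `ℚ`. -/
theorem stmt_18 (n : ℕ) (hn : 1 ≤ n) (f : Polynomial ℤ) :
    ∏ i ∈ Finset.range n,
        Polynomial.aeval ((Complex.exp (2 * Real.pi * Complex.I / n)) ^ i) f =
      ((∏ d ∈ n.divisors,
          Algebra.norm ℚ
            (Polynomial.aeval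
              (IntermediateField.AdjoinSimple.gen ℚ
                (Complex.exp (2 * Real.pi * Complex.I / d))) f) : ℚ) : ℂ) :=
  stmt_18_general n f
end
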